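/- arXiv:1911.00370 — 5 statements merged into one kernel-verified Lean document; each statement's English description precedes it below -/
import Mathlib

section
/- Suppose I : B° → ℝ is comonotonically additive and satisfies: for all a, b, c ∈ B° with c comonotonic with b, I(a) = I(b) implies I(a + c) ≥ I(b + c). Assume also I(1_Ω) = 1 and I(α·1_Ω) = α for constants. Then the set function v defined by v(A) = I(1_A) is supermodular (convex): v(A∪B) + v(A∩B) ≥ v(A) + v(B) for all A, B ∈ F. -/
/-- Two real-valued functions on `Ω` are comonotonic if
`(a ω - a ω') * (b ω - b ω') ≥ 0` for all `ω, ω'`. -/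
def Comonotonic {Ω : Type*} (a b : Ω → ℝ) : Prop :=
  ∀ ω ω', 0 ≤ (a ω - a ω') * (b ω - b ω')

/-- `B°`: the simple (finite-range) real-valued functions measurable with respect to
the algebra `F` of subsets of `Ω`. -/
def Bo {Ω : Type*} (F : Set (Set Ω)) : Set (Ω → ℝ) :=
  {f | (Set.range f).Finite ∧ ∀ y : ℝ, f ⁻¹' {y} ∈ F}

lemma const_mem_Bo {Ω : Type*} {F : Set (Set Ω)} (hFempty : ∅ ∈ F)
    (hFuniv : Set.univ ∈ F) (α : ℝ) : (fun _ : Ω => α) ∈ Bo F := by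
  constructor
  · exact (Set.finite_singleton α).subset (by rintro y ⟨ω, rfl⟩; exact rfl)
  · intro y
    by_cases h : α = y
    · convert hFuniv using 1
      ext ω; simp [h]
    · convert hFempty using 1
      ext ω; simp [h]

lemma indicator_mem_Bo {Ω : Type*} {F : Set (Set Ω)} (hFempty : ∅ ∈ F)
    (hFuniv : Set.univ ∈ F) (hFcompl : ∀ A ∈ F, Aᶜ ∈ F)
    {A : Set Ω} (hA : A ∈ F) : A.indicator (fun _ => (1 : ℝ)) ∈ Bo F := by
  constructor
  · apply ((Set.finite_singleton (0:ℝ)).insert 1).subset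
    rintro y ⟨ω, rfl⟩
    by_cases h : ω ∈ A <;> simp [Set.indicator_apply, h]
  · intro y
    by_cases h1 : y = 1
    · convert hA using 1
      ext ω
      by_cases h : ω ∈ A <;> simp [Set.indicator_apply, h, h1]
    · by_cases h0 : y = 0
      · convert hFcompl A hA using 1
        ext ω
        by_cases h : ω ∈ A <;> simp [Set.indicator_apply, h, h0, h1]
      · convert hFempty using 1
        ext ω
        by_cases h : ω ∈ A <;>
          simp [Set.indicator_apply, h, Ne.symm h1, Ne.symm h0]

lemma comonotonic_const {Ω : Type*} (α : ℝ) (b : Ω → ℝ) :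
    Comonotonic (fun _ => α) b := by
  intro ω ω'; simp

lemma comonotonic_const' {Ω : Type*} (α : ℝ) (b : Ω → ℝ) :
    Comonotonic b (fun _ => α) := by
  intro ω ω'; simp

/-- if `I` is comonotonically additive, satisfies the pessimistic
property (`I a = I b` implies `I (a+c) ≥ I (b+c)` whenever `c` is comonotonic with
`b`), and is normalized on constants, then `v(A) := I 1_A` is supermodular (convex). -/
theorem pessimistic_functional_convex_capacity
    {Ω : Type*} (F : Set (Set Ω)) (I : (Ω → ℝ) → ℝ)
    (hFempty : ∅ ∈ F) (hFuniv : Set.univ ∈ F)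
    (hFcompl : ∀ A ∈ F, Aᶜ ∈ F) (hFunion : ∀ A ∈ F, ∀ B ∈ F, A ∪ B ∈ F)
    (hFinter : ∀ A ∈ F, ∀ B ∈ F, A ∩ B ∈ F)
    (hadd : ∀ a ∈ Bo F, ∀ b ∈ Bo F, Comonotonic a b →
      I (fun ω => a ω + b ω) = I a + I b)
    (hpess : ∀ a ∈ Bo F, ∀ b ∈ Bo F, ∀ c ∈ Bo F, Comonotonic c b → I a = I b →
      I (fun ω => b ω + c ω) ≤ I (fun ω => a ω + c ω))
    (hconst : ∀ α : ℝ, I (fun _ => α) = α) :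
    ∀ A ∈ F, ∀ B ∈ F,
      I (A.indicator (fun _ => (1 : ℝ))) + I (B.indicator (fun _ => (1 : ℝ)))
        ≤ I ((A ∪ B).indicator (fun _ => (1 : ℝ)))
          + I ((A ∩ B).indicator (fun _ => (1 : ℝ))) := by
  intro A hA B hB
  set vA := I (A.indicator (fun _ => (1 : ℝ))) with hvA
  have hAmem := indicator_mem_Bo hFempty hFuniv hFcompl hA
  have hBmem := indicator_mem_Bo hFempty hFuniv hFcompl hB
  have hUmem := indicator_mem_Bo hFempty hFuniv hFcompl (hFunion A hA B hB)
  have hImem := indicator_mem_Bo hFempty hFuniv hFcompl (hFinter A hA B hB)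
  have hCmem := const_mem_Bo (F := F) hFempty hFuniv vA
  -- I (vA + 1_B) ≤ I (1_A + 1_B)
  have key : I (fun ω => (fun _ : Ω => vA) ω + B.indicator (fun _ => (1:ℝ)) ω)
      ≤ I (fun ω => A.indicator (fun _ => (1:ℝ)) ω + B.indicator (fun _ => (1:ℝ)) ω) :=
    hpess _ hAmem _ hCmem _ hBmem (comonotonic_const' vA _) (by rw [hconst])
  have lhs_eq : I (fun ω => (fun _ : Ω => vA) ω + B.indicator (fun _ => (1:ℝ)) ω)
      = vA + I (B.indicator (fun _ => (1:ℝ))) := by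
    rw [hadd _ hCmem _ hBmem (comonotonic_const vA _), hconst]
  -- 1_A + 1_B = 1_{A∪B} + 1_{A∩B}
  have sum_eq : (fun ω => A.indicator (fun _ => (1:ℝ)) ω + B.indicator (fun _ => (1:ℝ)) ω)
      = (fun ω => (A ∪ B).indicator (fun _ => (1:ℝ)) ω + (A ∩ B).indicator (fun _ => (1:ℝ)) ω) := by
    funext ω
    by_cases hAo : ω ∈ A <;> by_cases hBo : ω ∈ B <;>
      simp [Set.indicator_apply, hAo, hBo]
  have comUI : Comonotonic ((A ∪ B).indicator (fun _ => (1:ℝ)))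
      ((A ∩ B).indicator (fun _ => (1:ℝ))) := by
    intro ω ω'
    have hsub : ∀ x, x ∈ A ∩ B → x ∈ A ∪ B := fun x hx => Or.inl hx.1
    have h1 := hsub ω
    have h2 := hsub ω'
    by_cases hi : ω ∈ A ∩ B <;> by_cases hi' : ω' ∈ A ∩ B <;>
      by_cases hu : ω ∈ A ∪ B <;> by_cases hu' : ω' ∈ A ∪ B <;>
      simp_all [Set.indicator_apply] <;> norm_num
  have rhs_eq : I (fun ω => A.indicator (fun _ => (1:ℝ)) ω + B.indicator (fun _ => (1:ℝ)) ω)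
      = I ((A ∪ B).indicator (fun _ => (1:ℝ))) + I ((A ∩ B).indicator (fun _ => (1:ℝ))) := by
    rw [sum_eq, hadd _ hUmem _ hImem comUI]
  rw [lhs_eq, rhs_eq] at key
  exact key
end

section
/- Let v be a convex (supermodular) capacity on a measurable space (Ω, F). Then for all bounded measurable functions a, b : Ω → ℝ, the Choquet integral is superadditive: ∫(a+b) dv ≥ ∫a dv + ∫b dv. -/
open MeasureTheory

/-- The Choquet integral of a real-valued function `f` with respect to a set function
`v`: `∫_{-∞}^0 (v {f ≥ t} - 1) dt + ∫_0^∞ v {f ≥ t} dt`. -/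
noncomputable def choquet {Ω : Type*} (v : Set Ω → ℝ) (f : Ω → ℝ) : ℝ :=
  (∫ t in Set.Iio (0 : ℝ), (v {ω | t ≤ f ω} - 1)) +
    ∫ t in Set.Ioi (0 : ℝ), v {ω | t ≤ f ω}

section ChoquetAux

open Set

variable {Ω : Type*}

structure IsCapacityC (F : Set (Set Ω)) (v : Set Ω → ℝ) : Prop where
  hempty : ∅ ∈ F
  huniv : Set.univ ∈ F
  hcompl : ∀ A ∈ F, Aᶜ ∈ F
  hunion : ∀ A ∈ F, ∀ B ∈ F, A ∪ B ∈ F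
  hv0 : v ∅ = 0
  hv1 : v Set.univ = 1
  hmono : ∀ A ∈ F, ∀ B ∈ F, A ⊆ B → v A ≤ v B
  hconv : ∀ A ∈ F, ∀ B ∈ F, v A + v B ≤ v (A ∪ B) + v (A ∩ B)

namespace IsCapacityC

variable {F : Set (Set Ω)} {v : Set Ω → ℝ}

lemma hinter (hv : IsCapacityC F v) {A B : Set Ω} (hA : A ∈ F) (hB : B ∈ F) :
    A ∩ B ∈ F := by
  have h : A ∩ B = (Aᶜ ∪ Bᶜ)ᶜ := by ext ω; simp [not_or]
  rw [h]
  exact hv.hcompl _ (hv.hunion _ (hv.hcompl _ hA) _ (hv.hcompl _ hB))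

lemma v_nonneg (hv : IsCapacityC F v) {A : Set Ω} (hA : A ∈ F) : 0 ≤ v A := by
  have := hv.hmono ∅ hv.hempty A hA (Set.empty_subset A)
  linarith [hv.hv0]

lemma v_le_one (hv : IsCapacityC F v) {A : Set Ω} (hA : A ∈ F) : v A ≤ 1 := by
  have := hv.hmono A hA Set.univ hv.huniv (Set.subset_univ A)
  linarith [hv.hv1]

end IsCapacityC

lemma integrableOn_of_bdd {g : ℝ → ℝ} (hg : Measurable g) {C : ℝ}
    (hC : ∀ t, |g t| ≤ C) (s : Set ℝ) [IsFiniteMeasure (volume.restrict s)] :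
    IntegrableOn g s volume :=
  Integrable.mono' (integrable_const C) hg.aestronglyMeasurable (ae_of_all _ hC)

lemma intervalIntegrable_of_bdd {g : ℝ → ℝ} (hg : Measurable g) {C : ℝ}
    (hC : ∀ t, |g t| ≤ C) (a b : ℝ) : IntervalIntegrable g volume a b := by
  rw [intervalIntegrable_iff, Set.uIoc]
  exact integrableOn_of_bdd hg hC _

lemma setIntegral_Ioc_const_of_eqOn {g : ℝ → ℝ} {a b c : ℝ} (hab : a ≤ b)
    (h : ∀ t ∈ Ioc a b, g t = c) : ∫ t in Ioc a b, g t = (b - a) * c := by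
  rw [setIntegral_congr_fun measurableSet_Ioc h, setIntegral_const, Real.volume_real_Ioc_of_le hab,
    smul_eq_mul]

/-- The survival function of `f` under `v`. -/
def surv (v : Set Ω → ℝ) (f : Ω → ℝ) (t : ℝ) : ℝ := v {ω | t ≤ f ω}

variable {F : Set (Set Ω)} {v : Set Ω → ℝ}

section Surv

variable (hv : IsCapacityC F v) {f : Ω → ℝ} {M : ℝ}
  (hfF : ∀ t : ℝ, {ω | t ≤ f ω} ∈ F) (hfb : ∀ ω, |f ω| ≤ M)

include hv hfF

lemma surv_anti : Antitone (surv v f) := by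
  intro s t hst
  exact hv.hmono _ (hfF t) _ (hfF s) (fun ω hω => le_trans hst hω)

lemma surv_nonneg (t : ℝ) : 0 ≤ surv v f t := hv.v_nonneg (hfF t)

lemma surv_le_one (t : ℝ) : surv v f t ≤ 1 := hv.v_le_one (hfF t)

lemma surv_abs_le (t : ℝ) : |surv v f t| ≤ 1 :=
  abs_le.2 ⟨by linarith [surv_nonneg hv hfF t], surv_le_one hv hfF t⟩

lemma surv_measurable : Measurable (surv v f) := (surv_anti hv hfF).measurable

include hfb

lemma surv_eq_one {t : ℝ} (ht : t ≤ -M) : surv v f t = 1 := by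
  have h : {ω | t ≤ f ω} = Set.univ := by
    ext ω
    simp only [Set.mem_setOf_eq, Set.mem_univ, iff_true]
    have := (abs_le.1 (hfb ω)).1
    linarith
  rw [surv, h, hv.hv1]

lemma surv_eq_zero {t : ℝ} (ht : M < t) : surv v f t = 0 := by
  have h : {ω | t ≤ f ω} = ∅ := by
    ext ω
    simp only [Set.mem_setOf_eq, Set.mem_empty_iff_false, iff_false, not_le]
    have := (abs_le.1 (hfb ω)).2
    linarith
  rw [surv, h, hv.hv0]

/-- Representation of the Choquet integral as an integral over a bounded interval. -/
lemma choquet_eq {L : ℝ} (hL0 : 0 ≤ L) (hML : M ≤ L) :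
    choquet v f = -L + ∫ t in Ioc (-L) L, surv v f t := by
  have hmeas := surv_measurable hv hfF
  have hb1 := surv_abs_le hv hfF
  -- negative part
  have h1 : (∫ t in Iio (0 : ℝ), (surv v f t - 1)) = ∫ t in Ico (-L) 0, (surv v f t - 1) := by
    rw [← Set.Iio_union_Ico_eq_Iio (show -L ≤ (0:ℝ) by linarith)]
    rw [setIntegral_union (s := Iio (-L)) (t := Ico (-L) 0) (f := fun t => surv v f t - 1) ((Set.Iio_disjoint_Ici le_rfl).mono_right Set.Ico_subset_Ici_self)
        measurableSet_Ico
        ((integrableOn_zero (μ := volume)).congr_fun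
          (fun t ht => by
            rw [surv_eq_one hv hfF hfb (le_of_lt (lt_of_lt_of_le ht (by linarith)))]; ring)
          measurableSet_Iio)
        (integrableOn_of_bdd (g := fun t => surv v f t - 1) (hmeas.sub measurable_const)
          (C := 2) (fun t => by
            have := surv_nonneg hv hfF t; have := surv_le_one hv hfF t
            rw [abs_le]; constructor <;> linarith) _)]
    have hz : (∫ t in Iio (-L), (surv v f t - 1)) = 0 := by
      rw [setIntegral_congr_fun measurableSet_Iio
        (g := fun _ => (0:ℝ))
        (fun t ht => by
          rw [surv_eq_one hv hfF hfb (le_of_lt (lt_of_lt_of_le ht (by linarith)))]; ring)]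
      simp
    rw [hz, zero_add]
  have h2 : (∫ t in Ico (-L) 0, (surv v f t - 1)) = (∫ t in Ioc (-L) 0, surv v f t) - L := by
    rw [integral_sub (integrableOn_of_bdd hmeas hb1 _) (integrable_const 1)]
    rw [setIntegral_const, Real.volume_real_Ico_of_le (by linarith), smul_eq_mul,
      mul_one]
    have he : (∫ t in Ico (-L) 0, surv v f t) = ∫ t in Ioc (-L) 0, surv v f t := by
      rw [integral_Ico_eq_integral_Ioo, integral_Ioc_eq_integral_Ioo]
    rw [he]; ring
  have h3 : (∫ t in Ioi (0 : ℝ), surv v f t) = ∫ t in Ioc 0 L, surv v f t := by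
    rw [← Set.Ioc_union_Ioi_eq_Ioi hL0]
    rw [setIntegral_union Set.Ioc_disjoint_Ioi_same measurableSet_Ioi
        (integrableOn_of_bdd hmeas hb1 _)
        ((integrableOn_zero (μ := volume)).congr_fun
          (fun t ht => by
            rw [surv_eq_zero hv hfF hfb (lt_of_le_of_lt hML ht)])
          measurableSet_Ioi)]
    have hz : (∫ t in Ioi L, surv v f t) = 0 := by
      rw [setIntegral_congr_fun measurableSet_Ioi
        (g := fun _ => (0:ℝ))
        (fun t ht => by rw [surv_eq_zero hv hfF hfb (lt_of_le_of_lt hML ht)])]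
      simp
    rw [hz, add_zero]
  have h4 : (∫ t in Ioc (-L) 0, surv v f t) + ∫ t in Ioc 0 L, surv v f t
      = ∫ t in Ioc (-L) L, surv v f t := by
    rw [← Set.Ioc_union_Ioc_eq_Ioc (show -L ≤ (0:ℝ) by linarith) hL0]
    rw [setIntegral_union (by
        rw [Set.disjoint_left]; rintro x ⟨_, h2x⟩ ⟨h3x, _⟩; linarith)
      measurableSet_Ioc (integrableOn_of_bdd hmeas hb1 _) (integrableOn_of_bdd hmeas hb1 _)]
  show (∫ t in Iio (0 : ℝ), (surv v f t - 1)) + ∫ t in Ioi (0 : ℝ), surv v f t = _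
  rw [h1, h2, h3, ← h4]; ring


end Surv

lemma choquet_mono (hv : IsCapacityC F v) {f g : Ω → ℝ} {Mf Mg : ℝ}
    (hfF : ∀ t : ℝ, {ω | t ≤ f ω} ∈ F) (hfb : ∀ ω, |f ω| ≤ Mf)
    (hgF : ∀ t : ℝ, {ω | t ≤ g ω} ∈ F) (hgb : ∀ ω, |g ω| ≤ Mg)
    (hfg : ∀ ω, f ω ≤ g ω) : choquet v f ≤ choquet v g := by
  set L := max (max Mf Mg) 0 with hL
  have hL0 : (0:ℝ) ≤ L := le_max_right _ _
  rw [choquet_eq hv hfF hfb hL0 (le_trans (le_max_left _ _) (le_max_left _ _)),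
      choquet_eq hv hgF hgb hL0 (le_trans (le_max_right _ _) (le_max_left _ _))]
  have hpt : ∀ t, surv v f t ≤ surv v g t := fun t =>
    hv.hmono _ (hfF t) _ (hgF t) (fun ω hω => le_trans hω (hfg ω))
  have hI := setIntegral_mono_on
    (integrableOn_of_bdd (surv_measurable hv hfF) (surv_abs_le hv hfF) (Ioc (-L) L))
    (integrableOn_of_bdd (surv_measurable hv hgF) (surv_abs_le hv hgF) (Ioc (-L) L))
    measurableSet_Ioc (fun t _ => hpt t)
  linarith

lemma choquet_add_const (hv : IsCapacityC F v) {f : Ω → ℝ} {M c : ℝ}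
    (hfF : ∀ t : ℝ, {ω | t ≤ f ω} ∈ F) (hfb : ∀ ω, |f ω| ≤ M) (hc : 0 ≤ c) :
    choquet v (fun ω => f ω + c) = choquet v f + c := by
  have hM0 : (0:ℝ) ≤ max M 0 := le_max_right _ _
  have hML : M ≤ max M 0 := le_max_left _ _
  set L := max M 0 with hLdef
  have hfF' : ∀ t : ℝ, {ω | t ≤ f ω + c} ∈ F := by
    intro t
    have h : {ω | t ≤ f ω + c} = {ω | t - c ≤ f ω} := by
      ext ω; simp only [Set.mem_setOf_eq]; constructor <;> intro h <;> linarith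
    rw [h]; exact hfF _
  have hfb' : ∀ ω, |f ω + c| ≤ L + c := fun ω => by
    calc |f ω + c| ≤ |f ω| + |c| := abs_add_le _ _
      _ = |f ω| + c := by rw [abs_of_nonneg hc]
      _ ≤ L + c := by have := hfb ω; linarith
  have hs : ∀ t, surv v (fun ω => f ω + c) t = surv v f (t - c) := by
    intro t
    show v {ω | t ≤ f ω + c} = v {ω | t - c ≤ f ω}
    congr 1
    ext ω; simp only [Set.mem_setOf_eq]; constructor <;> intro h <;> linarith
  have hIab : ∀ p q : ℝ, IntervalIntegrable (surv v f) volume p q :=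
    fun p q => intervalIntegrable_of_bdd (surv_measurable hv hfF) (surv_abs_le hv hfF) p q
  calc choquet v (fun ω => f ω + c)
      = -(L+c) + ∫ t in Ioc (-(L+c)) (L+c), surv v (fun ω => f ω + c) t :=
        choquet_eq hv hfF' hfb' (by linarith) le_rfl
    _ = -(L+c) + ∫ t in (-(L+c))..(L+c), surv v f (t - c) := by
        rw [intervalIntegral.integral_of_le (by linarith)]
        congr 1
        exact setIntegral_congr_fun measurableSet_Ioc (fun t _ => hs t)
    _ = -(L+c) + ∫ t in (-(L+c)-c)..(L+c-c), surv v f t := by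
        rw [intervalIntegral.integral_comp_sub_right (fun t => surv v f t) c]
    _ = -(L+c) + ∫ t in (-L-2*c)..L, surv v f t := by
        have e1 : -(L+c)-c = -L-2*c := by ring
        have e2 : L+c-c = L := by ring
        rw [e1, e2]
    _ = -(L+c) + (2*c + ∫ t in (-L)..L, surv v f t) := by
        rw [← intervalIntegral.integral_add_adjacent_intervals (hIab (-L-2*c) (-L)) (hIab (-L) L)]
        have h1 : (∫ t in (-L-2*c)..(-L), surv v f t) = 2*c := by
          rw [intervalIntegral.integral_of_le (by linarith),
            setIntegral_Ioc_const_of_eqOn (by linarith)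
              (fun t ht => surv_eq_one hv hfF hfb (le_trans ht.2 (by linarith)))]
          ring
        rw [h1]
    _ = choquet v f + c := by
        rw [choquet_eq hv hfF hfb hM0 hML,
          intervalIntegral.integral_of_le (show -L ≤ L by linarith)]
        ring

lemma level_add_indicator {g : Ω → ℝ} {β : ℝ} (hβ : 0 ≤ β) (B : Set Ω) (t : ℝ) :
    {ω | t ≤ g ω + B.indicator (fun _ => β) ω}
      = {ω | t ≤ g ω} ∪ (B ∩ {ω | t - β ≤ g ω}) := by
  ext ω
  by_cases h : ω ∈ B
  · simp only [Set.mem_setOf_eq, Set.mem_union, Set.mem_inter_iff, h, true_and,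
      Set.indicator_of_mem h]
    constructor
    · intro h'; right; linarith
    · rintro (h' | h') <;> linarith
  · simp only [Set.mem_setOf_eq, Set.mem_union, Set.mem_inter_iff, h, false_and, or_false,
      Set.indicator_of_notMem h, add_zero]

lemma choquet_add_indicator (hv : IsCapacityC F v) {f : Ω → ℝ} {M β : ℝ} {B : Set Ω}
    (hfF : ∀ t : ℝ, {ω | t ≤ f ω} ∈ F) (hfb : ∀ ω, |f ω| ≤ M)
    (hB : B ∈ F) (hβ : 0 ≤ β) :
    choquet v f + β * v B ≤ choquet v (fun ω => f ω + B.indicator (fun _ => β) ω) := by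
  have hM0 : (0:ℝ) ≤ max M 0 := le_max_right _ _
  have hML : M ≤ max M 0 := le_max_left _ _
  set L := max M 0 + β with hLdef
  have hL0 : (0:ℝ) ≤ L := by linarith
  have hfF' : ∀ t : ℝ, {ω | t ≤ f ω + B.indicator (fun _ => β) ω} ∈ F := fun t => by
    rw [level_add_indicator hβ B t]
    exact hv.hunion _ (hfF t) _ (hv.hinter hB (hfF (t - β)))
  have hfb' : ∀ ω, |f ω + B.indicator (fun _ => β) ω| ≤ M + β := fun ω => by
    have h1 := abs_le.1 (hfb ω)
    rw [abs_le]
    by_cases h : ω ∈ B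
    · rw [Set.indicator_of_mem h]; constructor <;> linarith
    · rw [Set.indicator_of_notMem h]; constructor <;> linarith
  -- the auxiliary function g
  set g : ℝ → ℝ := fun t => v (B ∩ {ω | t ≤ f ω}) with hgdef
  have hgF : ∀ t, B ∩ {ω | t ≤ f ω} ∈ F := fun t => hv.hinter hB (hfF t)
  have hganti : Antitone g := fun s t hst =>
    hv.hmono _ (hgF t) _ (hgF s) (Set.inter_subset_inter_right _ (fun ω hω => le_trans hst hω))
  have hgabs : ∀ t, |g t| ≤ 1 := fun t =>
    abs_le.2 ⟨by linarith [hv.v_nonneg (hgF t)], hv.v_le_one (hgF t)⟩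
  have hgmeas : Measurable g := hganti.measurable
  have hg1 : ∀ t : ℝ, t ≤ -M → g t = v B := fun t ht => by
    have h : {ω | t ≤ f ω} = Set.univ := by
      ext ω
      simp only [Set.mem_setOf_eq, Set.mem_univ, iff_true]
      have := (abs_le.1 (hfb ω)).1; linarith
    rw [hgdef]
    simp only
    rw [h, Set.inter_univ]
  have hg0 : ∀ t : ℝ, M < t → g t = 0 := fun t ht => by
    have h : {ω | t ≤ f ω} = ∅ := by
      ext ω
      simp only [Set.mem_setOf_eq, Set.mem_empty_iff_false, iff_false, not_le]
      have := (abs_le.1 (hfb ω)).2; linarith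
    rw [hgdef]
    simp only
    rw [h, Set.inter_empty, hv.hv0]
  -- pointwise supermodularity
  have hpt : ∀ t, surv v f t + (g (t - β) - g t)
      ≤ surv v (fun ω => f ω + B.indicator (fun _ => β) ω) t := by
    intro t
    have hsub : {ω | t ≤ f ω} ⊆ {ω | t - β ≤ f ω} := fun ω hω => by
      simp only [Set.mem_setOf_eq] at *; linarith
    have hconv := hv.hconv _ (hfF t) _ (hgF (t - β))
    have hcap : {ω | t ≤ f ω} ∩ (B ∩ {ω | t - β ≤ f ω}) = B ∩ {ω | t ≤ f ω} := by
      ext ω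
      simp only [Set.mem_inter_iff, Set.mem_setOf_eq]
      constructor
      · rintro ⟨h1, h2, h3⟩; exact ⟨h2, h1⟩
      · rintro ⟨h1, h2⟩; exact ⟨h2, h1, hsub h2⟩
    have hcup : {ω | t ≤ f ω} ∪ (B ∩ {ω | t - β ≤ f ω})
        = {ω | t ≤ f ω + B.indicator (fun _ => β) ω} := (level_add_indicator hβ B t).symm
    rw [hcap, hcup] at hconv
    simp only [hgdef, surv]
    linarith
  -- integrability
  have hIg : ∀ p q : ℝ, IntervalIntegrable g volume p q :=
    fun p q => intervalIntegrable_of_bdd hgmeas hgabs p q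
  have hgmeas' : Measurable (fun t => g (t - β)) := hgmeas.comp (measurable_id.sub measurable_const)
  have hkey : (∫ t in Ioc (-L) L, (g (t - β) - g t)) = β * v B := by
    have h0 : (∫ t in Ioc (-L) L, (g (t - β) - g t))
        = (∫ t in (-L)..L, g (t - β)) - ∫ t in (-L)..L, g t := by
      rw [intervalIntegral.integral_of_le (show -L ≤ L by linarith),
        intervalIntegral.integral_of_le (show -L ≤ L by linarith),
        ← integral_sub (integrableOn_of_bdd hgmeas' (fun t => hgabs _) _)
          (integrableOn_of_bdd hgmeas hgabs _)]
    have hshift : (∫ t in (-L)..L, g (t - β)) = ∫ t in (-L-β)..(L-β), g t :=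
      intervalIntegral.integral_comp_sub_right g β
    have hsplit1 : (∫ t in (-L-β)..(L-β), g t)
        = (∫ t in (-L-β)..(-L), g t) + ∫ t in (-L)..(L-β), g t :=
      (intervalIntegral.integral_add_adjacent_intervals (hIg _ _) (hIg _ _)).symm
    have hsplit2 : (∫ t in (-L)..L, g t)
        = (∫ t in (-L)..(L-β), g t) + ∫ t in (L-β)..L, g t :=
      (intervalIntegral.integral_add_adjacent_intervals (hIg _ _) (hIg _ _)).symm
    have hc1 : (∫ t in (-L-β)..(-L), g t) = β * v B := by
      rw [intervalIntegral.integral_of_le (by linarith),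
        setIntegral_Ioc_const_of_eqOn (by linarith)
          (fun t ht => hg1 t (le_trans ht.2 (by linarith)))]
      ring
    have hc2 : (∫ t in (L-β)..L, g t) = 0 := by
      rw [intervalIntegral.integral_of_le (by linarith),
        setIntegral_Ioc_const_of_eqOn (by linarith)
          (fun t ht => hg0 t (lt_of_le_of_lt (by linarith) ht.1))]
      ring
    rw [h0, hshift, hsplit1, hsplit2, hc1, hc2]; ring
  have hint1 : IntegrableOn (fun t => g (t - β) - g t) (Ioc (-L) L) volume :=
    integrableOn_of_bdd (g := fun t => g (t - β) - g t) (hgmeas'.sub hgmeas) (C := 2)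
      (fun t => by
        have h1 := abs_le.1 (hgabs (t - β)); have h2 := abs_le.1 (hgabs t)
        rw [abs_le]; constructor <;> [linarith; linarith]) _
  have hintf : IntegrableOn (surv v f) (Ioc (-L) L) volume :=
    integrableOn_of_bdd (surv_measurable hv hfF) (surv_abs_le hv hfF) _
  have hintf' : IntegrableOn (surv v (fun ω => f ω + B.indicator (fun _ => β) ω))
      (Ioc (-L) L) volume :=
    integrableOn_of_bdd (surv_measurable hv hfF') (surv_abs_le hv hfF') _
  have hmono_int := setIntegral_mono_on (hintf.add hint1) hintf' measurableSet_Ioc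
    (fun t _ => hpt t)
  simp only [Pi.add_apply] at hmono_int
  rw [integral_add hintf hint1, hkey] at hmono_int
  rw [choquet_eq hv hfF hfb hL0 (by linarith : M ≤ L),
    choquet_eq hv hfF' hfb' hL0 (by linarith : M + β ≤ L)]
  linarith

lemma level_sum_mem (hv : IsCapacityC F v) {f : Ω → ℝ} {β : ℝ} {B : ℕ → Set Ω}
    (hfF : ∀ t : ℝ, {ω | t ≤ f ω} ∈ F) (hB : ∀ i, B i ∈ F) (hβ : 0 ≤ β) (n : ℕ) :
    ∀ t : ℝ, {ω | t ≤ f ω + ∑ i ∈ Finset.range n, (B i).indicator (fun _ => β) ω} ∈ F := by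
  induction n with
  | zero => intro t; simpa using hfF t
  | succ n ih =>
    intro t
    have hset : {ω | t ≤ f ω + ∑ i ∈ Finset.range (n+1), (B i).indicator (fun _ => β) ω}
        = {ω | t ≤ (fun ω => f ω + ∑ i ∈ Finset.range n, (B i).indicator (fun _ => β) ω) ω
            + (B n).indicator (fun _ => β) ω} := by
      ext ω
      simp only [Set.mem_setOf_eq, Finset.sum_range_succ]
      constructor <;> intro h <;> linarith
    rw [hset, level_add_indicator hβ (B n) t]
    exact hv.hunion _ (ih t) _ (hv.hinter (hB n) (ih (t - β)))

lemma sum_indicator_abs_le {β : ℝ} (hβ : 0 ≤ β) (B : ℕ → Set Ω) (n : ℕ) (ω : Ω) :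
    |∑ i ∈ Finset.range n, (B i).indicator (fun _ => β) ω| ≤ n * β := by
  have h1 : ∀ i ∈ Finset.range n, |(B i).indicator (fun _ => β) ω| ≤ β := by
    intro i _
    by_cases h : ω ∈ B i
    · rw [Set.indicator_of_mem h, abs_of_nonneg hβ]
    · rw [Set.indicator_of_notMem h]; simpa using hβ
  calc |∑ i ∈ Finset.range n, (B i).indicator (fun _ => β) ω|
      ≤ ∑ i ∈ Finset.range n, |(B i).indicator (fun _ => β) ω| :=
        Finset.abs_sum_le_sum_abs _ _
    _ ≤ ∑ _i ∈ Finset.range n, β := Finset.sum_le_sum h1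
    _ = n * β := by
        rw [Finset.sum_const, Finset.card_range, nsmul_eq_mul]

lemma choquet_add_sum (hv : IsCapacityC F v) {f : Ω → ℝ} {Mf β : ℝ} {B : ℕ → Set Ω}
    (hfF : ∀ t : ℝ, {ω | t ≤ f ω} ∈ F) (hfb : ∀ ω, |f ω| ≤ Mf)
    (hB : ∀ i, B i ∈ F) (hβ : 0 ≤ β) (n : ℕ) :
    choquet v f + β * ∑ i ∈ Finset.range n, v (B i)
      ≤ choquet v (fun ω => f ω + ∑ i ∈ Finset.range n, (B i).indicator (fun _ => β) ω) := by
  induction n with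
  | zero => simp
  | succ n ih =>
    have hgF := level_sum_mem hv hfF hB hβ n
    have hgb : ∀ ω, |f ω + ∑ i ∈ Finset.range n, (B i).indicator (fun _ => β) ω|
        ≤ Mf + n * β := fun ω => by
      have h1 := hfb ω
      have h2 := sum_indicator_abs_le hβ B n ω
      calc |f ω + ∑ i ∈ Finset.range n, (B i).indicator (fun _ => β) ω|
          ≤ |f ω| + |∑ i ∈ Finset.range n, (B i).indicator (fun _ => β) ω| := abs_add_le _ _
        _ ≤ Mf + n * β := by linarith
    have hstep := choquet_add_indicator hv
      (f := fun ω => f ω + ∑ i ∈ Finset.range n, (B i).indicator (fun _ => β) ω)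
      hgF hgb (hB n) hβ (B := B n)
    have hfun : (fun ω => (fun ω => f ω + ∑ i ∈ Finset.range n, (B i).indicator (fun _ => β) ω) ω
          + (B n).indicator (fun _ => β) ω)
        = fun ω => f ω + ∑ i ∈ Finset.range (n+1), (B i).indicator (fun _ => β) ω := by
      funext ω
      simp only [Finset.sum_range_succ]
      ring
    rw [hfun] at hstep
    rw [Finset.sum_range_succ, mul_add]
    calc choquet v f + (β * ∑ i ∈ Finset.range n, v (B i) + β * v (B n))
        = (choquet v f + β * ∑ i ∈ Finset.range n, v (B i)) + β * v (B n) := by ring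
      _ ≤ choquet v (fun ω => f ω + ∑ i ∈ Finset.range n, (B i).indicator (fun _ => β) ω)
          + β * v (B n) := by linarith
      _ ≤ _ := hstep

lemma sum_indicator_le_of_level {β c : ℝ} (hβ : 0 < β) (hc : 0 ≤ c) (n : ℕ)
    (B : ℕ → Set Ω) (ω : Ω) (hP : ∀ i : ℕ, ω ∈ B i → ((i:ℝ)+1) * β ≤ c) :
    ∑ i ∈ Finset.range n, (B i).indicator (fun _ => β) ω ≤ c := by
  classical
  have h1 : ∑ i ∈ Finset.range n, (B i).indicator (fun _ => β) ω
      = ((Finset.range n).filter (fun i => ω ∈ B i)).card • β := by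
    rw [← Finset.sum_const, Finset.sum_filter]
    refine Finset.sum_congr rfl fun i _ => ?_
    by_cases h : ω ∈ B i
    · rw [Set.indicator_of_mem h, if_pos h]
    · rw [Set.indicator_of_notMem h, if_neg h]
  have h2 : (Finset.range n).filter (fun i => ω ∈ B i) ⊆ Finset.range (Nat.floor (c / β)) := by
    intro i hi
    rw [Finset.mem_filter] at hi
    rw [Finset.mem_range]
    have h3 : ((i:ℝ)+1) ≤ c / β := by
      rw [le_div_iff₀ hβ]; exact hP i hi.2
    have h4 : i + 1 ≤ Nat.floor (c / β) := Nat.le_floor (by push_cast; linarith)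
    omega
  have h5 : ((Finset.range n).filter (fun i => ω ∈ B i)).card ≤ Nat.floor (c / β) := by
    simpa using Finset.card_le_card h2
  have h6 : (Nat.floor (c/β) : ℝ) ≤ c / β := Nat.floor_le (div_nonneg hc hβ.le)
  have h7 : ((((Finset.range n).filter (fun i => ω ∈ B i)).card : ℕ) : ℝ) ≤ c / β :=
    le_trans (by exact_mod_cast h5) h6
  rw [h1, nsmul_eq_mul]
  calc (((Finset.range n).filter (fun i => ω ∈ B i)).card : ℝ) * β
      ≤ (c / β) * β := mul_le_mul_of_nonneg_right h7 hβ.le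
    _ = c := div_mul_cancel₀ c hβ.ne'
end ChoquetAux

/-- the Choquet integral with respect to a convex (supermodular)
capacity is superadditive. -/
theorem choquet_superadditive_of_convex
    {Ω : Type*} (F : Set (Set Ω)) (v : Set Ω → ℝ) (a b : Ω → ℝ) (Ma Mb : ℝ)
    -- F is an algebra of sets
    (hFempty : ∅ ∈ F) (hFuniv : Set.univ ∈ F)
    (hFcompl : ∀ A ∈ F, Aᶜ ∈ F) (hFunion : ∀ A ∈ F, ∀ B ∈ F, A ∪ B ∈ F)
    -- v is a capacity
    (hv0 : v ∅ = 0) (hv1 : v Set.univ = 1)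
    (hvmono : ∀ A ∈ F, ∀ B ∈ F, A ⊆ B → v A ≤ v B)
    -- convexity (supermodularity)
    (hconvex : ∀ A ∈ F, ∀ B ∈ F, v A + v B ≤ v (A ∪ B) + v (A ∩ B))
    -- a, b bounded and measurable
    (ha : ∀ ω, |a ω| ≤ Ma) (hb : ∀ ω, |b ω| ≤ Mb)
    (hameas : ∀ t : ℝ, {ω | t ≤ a ω} ∈ F)
    (hbmeas : ∀ t : ℝ, {ω | t ≤ b ω} ∈ F)
    (habmeas : ∀ t : ℝ, {ω | t ≤ a ω + b ω} ∈ F) :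
    choquet v a + choquet v b ≤ choquet v (fun ω => a ω + b ω) := by
  have hv : IsCapacityC F v := ⟨hFempty, hFuniv, hFcompl, hFunion, hv0, hv1, hvmono, hconvex⟩
  by_cases hne : Nonempty Ω
  swap
  · exfalso
    have huniv : (Set.univ : Set Ω) = ∅ := Set.univ_eq_empty_iff.mpr (not_nonempty_iff.mp hne)
    rw [huniv, hv0] at hv1
    norm_num at hv1
  obtain ⟨ω0⟩ := hne
  have hMa0 : 0 ≤ Ma := le_trans (abs_nonneg _) (ha ω0)
  have hMb0 : 0 ≤ Mb := le_trans (abs_nonneg _) (hb ω0)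
  rcases eq_or_lt_of_le hMb0 with hMb | hMb
  · -- Mb = 0, so b ≡ 0
    have hbz : ∀ ω, b ω = 0 := fun ω =>
      abs_eq_zero.mp (le_antisymm (le_trans (hb ω) hMb.symm.le) (abs_nonneg _))
    have hab : (fun ω => a ω + b ω) = a := funext fun ω => by rw [hbz ω, add_zero]
    have hcb : choquet v b = 0 := by
      show (∫ t in Set.Iio (0:ℝ), (v {ω | t ≤ b ω} - 1)) + ∫ t in Set.Ioi (0:ℝ), v {ω | t ≤ b ω} = 0
      have h1 : (∫ t in Set.Iio (0:ℝ), (v {ω | t ≤ b ω} - 1)) = 0 := by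
        rw [setIntegral_congr_fun measurableSet_Iio (g := fun _ => (0:ℝ))
          (fun t ht => by
            have hs : {ω | t ≤ b ω} = Set.univ := by
              ext ω
              simp only [Set.mem_setOf_eq, Set.mem_univ, iff_true, hbz ω]
              exact le_of_lt ht
            rw [hs, hv1]; ring)]
        simp
      have h2 : (∫ t in Set.Ioi (0:ℝ), v {ω | t ≤ b ω}) = 0 := by
        rw [setIntegral_congr_fun measurableSet_Ioi (g := fun _ => (0:ℝ))
          (fun t ht => by
            have hs : {ω | t ≤ b ω} = ∅ := by
              ext ω
              simp only [Set.mem_setOf_eq, Set.mem_empty_iff_false, iff_false, not_le, hbz ω]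
              exact ht
            rw [hs, hv0])]
        simp
      rw [h1, h2]; ring
    rw [hab, hcb, add_zero]
  · -- Mb > 0
    refine le_of_forall_pos_le_add fun ε hε => ?_
    obtain ⟨n, hn⟩ := exists_nat_gt (2 * Mb / ε)
    have hn0 : 0 < (n:ℝ) := lt_of_le_of_lt (div_nonneg (by linarith) hε.le) hn
    have hnn : 0 < n := by exact_mod_cast hn0
    set β := 2 * Mb / n with hβdef
    have hβ : 0 < β := div_pos (by linarith) hn0
    have hβε : β < ε := by
      rw [hβdef, div_lt_iff₀ hn0]
      have := (div_lt_iff₀ hε).mp hn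
      linarith
    set B : ℕ → Set Ω := fun i => {ω | -Mb + ((i:ℝ)+1) * β ≤ b ω} with hBdef
    have hBF : ∀ i, B i ∈ F := fun i => by rw [hBdef]; exact hbmeas _
    -- Riemann upper bound for `choquet v b`
    have hIb : ∀ p q : ℝ, IntervalIntegrable (surv v b) volume p q :=
      fun p q => intervalIntegrable_of_bdd (surv_measurable hv hbmeas) (surv_abs_le hv hbmeas) p q
    set tg : ℕ → ℝ := fun i => -Mb + i * β with htgdef
    have htg0 : tg 0 = -Mb := by simp [htgdef]
    have htgn : tg n = Mb := by
      rw [htgdef]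
      simp only
      rw [hβdef]
      field_simp
      ring
    have hpiece : ∀ k : ℕ, (∫ t in tg k..tg (k+1), surv v b t) ≤ β * v {ω | tg k ≤ b ω} := by
      intro k
      have hle : tg k ≤ tg (k+1) := by
        rw [htgdef]; simp only; push_cast; nlinarith [hβ.le]
      have hmono := intervalIntegral.integral_mono_on (f := surv v b)
        (g := fun _ => v {ω | tg k ≤ b ω}) hle (hIb _ _) intervalIntegrable_const
        (fun t ht => hv.hmono _ (hbmeas t) _ (hbmeas (tg k)) (fun ω hω => le_trans ht.1 hω))
      rw [intervalIntegral.integral_const, smul_eq_mul] at hmono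
      have hd : tg (k+1) - tg k = β := by rw [htgdef]; simp only; push_cast; ring
      rw [hd] at hmono
      exact hmono
    have hsum := intervalIntegral.sum_integral_adjacent_intervals
      (a := tg) (μ := volume) (f := surv v b) (n := n) (fun k _ => hIb _ _)
    have hchain : (∫ t in Set.Ioc (-Mb) Mb, surv v b t)
        ≤ ∑ k ∈ Finset.range n, β * v {ω | tg k ≤ b ω} := by
      rw [← intervalIntegral.integral_of_le (by linarith : -Mb ≤ Mb), ← htg0, ← htgn, ← hsum]
      exact Finset.sum_le_sum (fun k _ => hpiece k)
    have hrep : choquet v b = -Mb + ∫ t in Set.Ioc (-Mb) Mb, surv v b t :=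
      choquet_eq hv hbmeas hb hMb0 le_rfl
    have h4 : choquet v b ≤ -Mb + β + β * ∑ i ∈ Finset.range n, v (B i) := by
      obtain ⟨m, hm⟩ := Nat.exists_eq_succ_of_ne_zero (Nat.pos_iff_ne_zero.mp hnn)
      have hsum0 : v {ω | tg 0 ≤ b ω} = 1 := by
        have h : {ω | tg 0 ≤ b ω} = Set.univ := by
          ext ω
          simp only [Set.mem_setOf_eq, Set.mem_univ, iff_true]
          rw [htg0]
          have := abs_le.1 (hb ω)
          linarith
        rw [h, hv.hv1]
      have hBk : ∀ k : ℕ, {ω | tg (k+1) ≤ b ω} = B k := by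
        intro k
        rw [hBdef, htgdef]
        simp only
        ext ω
        simp only [Set.mem_setOf_eq]
        push_cast
        constructor <;> intro h <;> linarith
      have hsplit : ∑ k ∈ Finset.range n, β * v {ω | tg k ≤ b ω}
          = ∑ k ∈ Finset.range m, β * v {ω | tg (k+1) ≤ b ω} + β * v {ω | tg 0 ≤ b ω} := by
        rw [hm]; exact Finset.sum_range_succ' _ m
      have hs2 : ∑ k ∈ Finset.range m, β * v {ω | tg (k+1) ≤ b ω}
          = ∑ k ∈ Finset.range m, β * v (B k) :=
        Finset.sum_congr rfl fun k _ => by rw [hBk k]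
      have hle2 : ∑ k ∈ Finset.range m, β * v (B k) ≤ β * ∑ i ∈ Finset.range n, v (B i) := by
        rw [← Finset.mul_sum]
        refine mul_le_mul_of_nonneg_left ?_ hβ.le
        rw [hm, Finset.sum_range_succ]
        have := hv.v_nonneg (hBF m)
        linarith
      have := hchain
      rw [hsplit, hs2, hsum0] at this
      linarith [hrep, this, hle2]
    -- induction lower bound
    have h3 := choquet_add_sum hv hameas ha hBF hβ.le n
    -- monotonicity
    have hsF := level_sum_mem hv hameas hBF hβ.le n
    have hsb : ∀ ω, |a ω + ∑ i ∈ Finset.range n, (B i).indicator (fun _ => β) ω| ≤ Ma + n * β :=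
      fun ω => by
        have h1 := ha ω
        have h2 := sum_indicator_abs_le hβ.le B n ω
        calc |a ω + ∑ i ∈ Finset.range n, (B i).indicator (fun _ => β) ω|
            ≤ |a ω| + |∑ i ∈ Finset.range n, (B i).indicator (fun _ => β) ω| := abs_add_le _ _
          _ ≤ Ma + n * β := by linarith
    have habF2 : ∀ t : ℝ, {ω | t ≤ a ω + b ω + Mb} ∈ F := fun t => by
      have h : {ω | t ≤ a ω + b ω + Mb} = {ω | t - Mb ≤ a ω + b ω} := by
        ext ω; simp only [Set.mem_setOf_eq]; constructor <;> intro h <;> linarith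
      rw [h]; exact habmeas _
    have habb2 : ∀ ω, |a ω + b ω + Mb| ≤ Ma + Mb + Mb := fun ω => by
      obtain ⟨h1a, h1b⟩ := abs_le.1 (ha ω)
      obtain ⟨h2a, h2b⟩ := abs_le.1 (hb ω)
      rw [abs_le]; constructor <;> linarith
    have h2 : choquet v (fun ω => a ω + ∑ i ∈ Finset.range n, (B i).indicator (fun _ => β) ω)
        ≤ choquet v (fun ω => a ω + b ω + Mb) := by
      apply choquet_mono hv hsF hsb habF2 habb2
      intro ω
      have hsum' : ∑ i ∈ Finset.range n, (B i).indicator (fun _ => β) ω ≤ b ω + Mb := by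
        refine sum_indicator_le_of_level hβ (by have := abs_le.1 (hb ω); linarith) n B ω ?_
        intro i hi
        rw [hBdef] at hi
        simp only [Set.mem_setOf_eq] at hi
        linarith
      linarith
    -- translation
    have h1 : choquet v (fun ω => a ω + b ω + Mb) = choquet v (fun ω => a ω + b ω) + Mb := by
      have := choquet_add_const hv (f := fun ω => a ω + b ω) (M := Ma + Mb) habmeas
        (fun ω => by
          obtain ⟨h1a, h1b⟩ := abs_le.1 (ha ω)
          obtain ⟨h2a, h2b⟩ := abs_le.1 (hb ω)
          rw [abs_le]; constructor <;> · linarith)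
        hMb.le
      exact this
    linarith [h1, h2, h3, h4, hβε]
end

section
/- The Choquet integral with respect to a capacity v is comonotonically additive: if a, b : Ω → ℝ are bounded, measurable, and comonotonic, then ∫(a+b) dv = ∫a dv + ∫b dv. -/
open MeasureTheory

open Set

lemma integrableOn_of_antitone (F : ℝ → ℝ) (hF : Antitone F) (C : ℝ)
    (hC : ∀ t, |F t| ≤ C) (s : Set ℝ) (hs : volume s < ⊤) :
    IntegrableOn F s := by
  refine Integrable.mono' (g := fun _ => C) (integrableOn_const (ne_of_lt hs))
    hF.measurable.aestronglyMeasurable (ae_of_all _ fun t => ?_)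
  simpa [Real.norm_eq_abs] using hC t

/-- clamped quantile function -/
noncomputable def qf (F : ℝ → ℝ) (M : ℝ) : ℝ → ℝ :=
  fun p => sSup ({t | p ≤ F t} ∩ Iic M ∪ {-M})

lemma qf_bddAbove (F : ℝ → ℝ) (M : ℝ) (hM : 0 ≤ M) (p : ℝ) :
    BddAbove ({t | p ≤ F t} ∩ Iic M ∪ {-M}) := by
  refine ⟨M, fun t ht => ?_⟩
  rcases ht with ⟨_, h⟩ | h
  · exact h
  · simp only [mem_singleton_iff] at h; linarith [h.le]

lemma qf_nonempty (F : ℝ → ℝ) (M : ℝ) (p : ℝ) :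
    (({t | p ≤ F t} ∩ Iic M ∪ {-M}) : Set ℝ).Nonempty :=
  ⟨-M, Or.inr rfl⟩

lemma qf_antitone (F : ℝ → ℝ) (M : ℝ) (hM : 0 ≤ M) : Antitone (qf F M) := by
  intro p q hpq
  refine csSup_le_csSup (qf_bddAbove F M hM p) (qf_nonempty F M q) ?_
  rintro t (⟨h1, h2⟩ | h)
  · exact Or.inl ⟨le_trans hpq h1, h2⟩
  · exact Or.inr h

lemma qf_mem_Icc (F : ℝ → ℝ) (M : ℝ) (hM : 0 ≤ M) (p : ℝ) :
    qf F M p ∈ Icc (-M) M := by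
  constructor
  · exact le_csSup (qf_bddAbove F M hM p) (Or.inr rfl)
  · refine csSup_le (qf_nonempty F M p) ?_
    rintro t (⟨_, h2⟩ | h)
    · exact h2
    · simp only [mem_singleton_iff] at h; linarith [h.le]

lemma qf_eq (F : ℝ → ℝ) (M : ℝ) (p : ℝ) (hp0 : 0 < p)
    (h1 : p ≤ F (-M)) (h0 : ∀ t, M < t → F t = 0) :
    qf F M p = sSup {t | p ≤ F t} := by
  unfold qf
  congr 1
  ext t
  constructor
  · rintro (⟨h, _⟩ | h)
    · exact h
    · simp only [mem_singleton_iff] at h; subst h; exact h1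
  · intro h
    refine Or.inl ⟨h, ?_⟩
    simp only [mem_setOf_eq] at h
    by_contra hc
    simp only [mem_Iic, not_le] at hc
    rw [h0 t hc] at h
    exact absurd (lt_of_lt_of_le hp0 h) (lt_irrefl 0)

lemma key_integral (F : ℝ → ℝ) (M : ℝ) (hM : 0 ≤ M) (hF : Antitone F)
    (h1 : ∀ t, t ≤ -M → F t = 1) (h0 : ∀ t, M < t → F t = 0) :
    ∫ t in Ioc (-M) M, F t = M + ∫ p in Ioo (0:ℝ) 1, sSup {t | p ≤ F t} := by
  have hFnn : ∀ t, 0 ≤ F t := by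
    intro t
    rcases le_or_gt t M with h | h
    · have := hF (show t ≤ M + 1 by linarith)
      rw [h0 (M+1) (by linarith)] at this
      exact this
    · rw [h0 t h]
  have hFle1 : ∀ t, F t ≤ 1 := by
    intro t
    rcases le_or_gt t (-M) with h | h
    · exact (h1 t h).le
    · have := hF h.le
      rwa [h1 (-M) le_rfl] at this
  -- the region under the graph of F
  set S : Set (ℝ × ℝ) :=
    (Ioc (-M) M ×ˢ Ioo (0:ℝ) 1) ∩ {x : ℝ × ℝ | x.2 < F x.1} with hSdef
  have hS : MeasurableSet S := by
    refine (measurableSet_Ioc.prod measurableSet_Ioo).inter ?_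
    exact measurableSet_lt measurable_snd (hF.measurable.comp measurable_fst)
  have hmemS : ∀ x : ℝ × ℝ, x ∈ S ↔ x.1 ∈ Ioc (-M) M ∧ x.2 ∈ Ioo (0:ℝ) 1 ∧ x.2 < F x.1 := by
    intro x
    simp [hSdef, Set.mem_prod, and_assoc]
  -- integrability of F
  have hIntF : IntegrableOn F (Ioc (-M) M) := by
    refine integrableOn_of_antitone F hF 1 (fun t => abs_le.2 ⟨by linarith [hFnn t], hFle1 t⟩)
      _ (by rw [Real.volume_Ioc]; exact ENNReal.ofReal_lt_top)
  -- slicing vertically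
  have hA1 : (volume.prod volume) S = ENNReal.ofReal (∫ t in Ioc (-M) M, F t) := by
    rw [Measure.prod_apply hS]
    have hslice : ∀ t : ℝ, volume (Prod.mk t ⁻¹' S) =
        (Ioc (-M) M).indicator (fun t => ENNReal.ofReal (F t)) t := by
      intro t
      rcases em (t ∈ Ioc (-M) M) with ht | ht
      · have : Prod.mk t ⁻¹' S = Ioo (0:ℝ) (F t) := by
          ext p
          simp only [mem_preimage, hmemS, mem_Ioo]
          constructor
          · rintro ⟨_, ⟨hp0, _⟩, hpF⟩; exact ⟨hp0, hpF⟩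
          · rintro ⟨hp0, hpF⟩
            exact ⟨ht, ⟨hp0, lt_of_lt_of_le hpF (hFle1 t)⟩, hpF⟩
        rw [this, Real.volume_Ioo, indicator_of_mem ht]
        simp
      · have : Prod.mk t ⁻¹' S = ∅ := by
          ext p
          simp only [mem_preimage, hmemS, mem_empty_iff_false, iff_false]
          rintro ⟨h, _, _⟩; exact ht h
        rw [this, indicator_of_notMem ht]
        simp
    rw [lintegral_congr hslice, lintegral_indicator measurableSet_Ioc,
      ← ofReal_integral_eq_lintegral_ofReal hIntF (ae_of_all _ hFnn)]
  -- slicing horizontally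
  have hA2 : (volume.prod volume) S =
      ∫⁻ p in Ioo (0:ℝ) 1, ENNReal.ofReal (sSup {t | p < F t} + M) := by
    rw [Measure.prod_apply_symm hS]
    have hslice : ∀ p : ℝ, volume ((fun t => (t, p)) ⁻¹' S) =
        (Ioo (0:ℝ) 1).indicator (fun p => ENNReal.ofReal (sSup {t | p < F t} + M)) p := by
      intro p
      rcases em (p ∈ Ioo (0:ℝ) 1) with hp | hp
      · obtain ⟨hp0, hp1⟩ := hp
        set D : Set ℝ := {t | p < F t} with hD
        have hDne : D.Nonempty := ⟨-M, by simp only [hD, mem_setOf_eq, h1 (-M) le_rfl]; exact hp1⟩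
        have hDbdd : BddAbove D := by
          refine ⟨M, fun t ht => ?_⟩
          by_contra hc
          push_neg at hc
          simp only [hD, mem_setOf_eq, h0 t hc] at ht
          exact absurd (ht.trans hp0) (lt_irrefl p)
        have hqle : sSup D ≤ M := csSup_le hDne (fun t ht => by
          by_contra hc
          push_neg at hc
          simp only [hD, mem_setOf_eq, h0 t hc] at ht
          exact absurd (ht.trans hp0) (lt_irrefl p))
        have hqge : -M ≤ sSup D := le_csSup hDbdd (by
          simp only [hD, mem_setOf_eq, h1 (-M) le_rfl]; exact hp1)
        have hsub1 : Ioo (-M) (sSup D) ⊆ (fun t => (t, p)) ⁻¹' S := by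
          rintro t ⟨htl, htr⟩
          obtain ⟨s, hs, hts⟩ := exists_lt_of_lt_csSup hDne htr
          have hpt : p < F t := lt_of_lt_of_le hs (hF hts.le)
          simp only [mem_preimage, hmemS]
          exact ⟨⟨htl, le_trans (le_csSup hDbdd (show t ∈ D from hpt)) hqle⟩, ⟨hp0, hp1⟩, hpt⟩
        have hsub2 : (fun t => (t, p)) ⁻¹' S ⊆ Ioc (-M) (sSup D) := by
          intro t ht
          simp only [mem_preimage, hmemS] at ht
          exact ⟨ht.1.1, le_csSup hDbdd ht.2.2⟩
        have hv1' : volume (Ioo (-M) (sSup D)) = ENNReal.ofReal (sSup D + M) := by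
          rw [Real.volume_Ioo]; congr 1; ring
        have hv2' : volume (Ioc (-M) (sSup D)) = ENNReal.ofReal (sSup D + M) := by
          rw [Real.volume_Ioc]; congr 1; ring
        have := le_antisymm (le_trans (measure_mono hsub2) hv2'.le)
          (le_trans hv1'.ge (measure_mono hsub1))
        rw [this, indicator_of_mem (show p ∈ Ioo (0:ℝ) 1 from ⟨hp0, hp1⟩)]
      · have : (fun t => (t, p)) ⁻¹' S = ∅ := by
          ext t
          simp only [mem_preimage, hmemS, mem_empty_iff_false, iff_false]
          rintro ⟨_, h, _⟩; exact hp h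
        rw [this, indicator_of_notMem hp]
        simp
    rw [lintegral_congr hslice, lintegral_indicator measurableSet_Ioo]
  -- a.e. identification of strict and weak quantile functions
  have hN : {p : ℝ | ¬ContinuousAt (qf F M) p}.Countable :=
    (qf_antitone F M hM).countable_not_continuousAt
  have hae : ∀ᵐ p ∂(volume.restrict (Ioo (0:ℝ) 1)),
      ENNReal.ofReal (sSup {t | p < F t} + M) = ENNReal.ofReal (qf F M p + M) := by
    have hvol : volume {p : ℝ | ¬ContinuousAt (qf F M) p} = 0 := hN.measure_zero _
    have h1' : ∀ᵐ p ∂volume, ContinuousAt (qf F M) p := by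
      rw [ae_iff]
      simpa using hvol
    filter_upwards [ae_restrict_of_ae h1', ae_restrict_mem measurableSet_Ioo] with p hc hp
    obtain ⟨hp0, hp1⟩ := hp
    have hqfe : qf F M p = sSup {t | p ≤ F t} :=
      qf_eq F M p hp0 (by rw [h1 (-M) le_rfl]; exact hp1.le) h0
    have hDne : ({t | p < F t} : Set ℝ).Nonempty :=
      ⟨-M, by simp only [mem_setOf_eq, h1 (-M) le_rfl]; exact hp1⟩
    have hDbdd : BddAbove ({t | p < F t} : Set ℝ) := by
      refine ⟨M, fun t ht => ?_⟩
      by_contra hc'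
      push_neg at hc'
      simp only [mem_setOf_eq, h0 t hc'] at ht
      exact absurd (ht.trans hp0) (lt_irrefl p)
    have hWbdd : BddAbove ({t | p ≤ F t} : Set ℝ) := by
      refine ⟨M, fun t ht => ?_⟩
      by_contra hc'
      push_neg at hc'
      simp only [mem_setOf_eq, h0 t hc'] at ht
      exact absurd (lt_of_lt_of_le hp0 ht) (lt_irrefl 0)
    have hle : sSup {t | p < F t} ≤ qf F M p := by
      rw [hqfe]
      exact csSup_le_csSup hWbdd hDne (fun t ht => by simp only [mem_setOf_eq] at ht ⊢; exact ht.le)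
    have hge : qf F M p ≤ sSup {t | p < F t} := by
      have htend : Filter.Tendsto (qf F M) (nhdsWithin p (Ioi p)) (nhds (qf F M p)) :=
        hc.tendsto.mono_left nhdsWithin_le_nhds
      refine le_of_tendsto htend ?_
      have hmem : Ioo p 1 ∈ nhdsWithin p (Ioi p) := Ioo_mem_nhdsGT_of_mem ⟨le_rfl, hp1⟩
      filter_upwards [hmem] with x hx
      obtain ⟨hpx, hx1⟩ := hx
      have hqfx : qf F M x = sSup {t | x ≤ F t} :=
        qf_eq F M x (hp0.trans hpx) (by rw [h1 (-M) le_rfl]; exact hx1.le) h0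
      rw [hqfx]
      refine csSup_le ⟨-M, by simp only [mem_setOf_eq, h1 (-M) le_rfl]; exact hx1.le⟩
        (fun t ht => le_csSup hDbdd ?_)
      simp only [mem_setOf_eq] at ht ⊢
      exact lt_of_lt_of_le hpx ht
    rw [le_antisymm hle hge]
  have hA2' : (volume.prod volume) S = ∫⁻ p in Ioo (0:ℝ) 1, ENNReal.ofReal (qf F M p + M) :=
    hA2.trans (lintegral_congr_ae hae)
  -- from lintegral to Bochner integral
  have hqfIcc := fun p => qf_mem_Icc F M hM p
  have hIntqf : IntegrableOn (qf F M) (Ioo (0:ℝ) 1) :=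
    integrableOn_of_antitone _ (qf_antitone F M hM) M
      (fun p => abs_le.2 ⟨(hqfIcc p).1, (hqfIcc p).2⟩) _
      (by rw [Real.volume_Ioo]; exact ENNReal.ofReal_lt_top)
  have hIntqfM : IntegrableOn (fun p => qf F M p + M) (Ioo (0:ℝ) 1) := by
    refine hIntqf.add ?_
    exact integrableOn_const (ne_of_lt (by rw [Real.volume_Ioo]; exact ENNReal.ofReal_lt_top))
  have hA2'' : (volume.prod volume) S
      = ENNReal.ofReal (∫ p in Ioo (0:ℝ) 1, (qf F M p + M)) := by
    rw [hA2', ← ofReal_integral_eq_lintegral_ofReal hIntqfM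
      (ae_of_all _ fun p => show (0:ℝ) ≤ qf F M p + M by linarith [(hqfIcc p).1])]
  have hint_nonneg : 0 ≤ ∫ t in Ioc (-M) M, F t :=
    setIntegral_nonneg measurableSet_Ioc (fun t _ => hFnn t)
  have hint2_nonneg : 0 ≤ ∫ p in Ioo (0:ℝ) 1, (qf F M p + M) :=
    setIntegral_nonneg measurableSet_Ioo (fun p _ => by linarith [(hqfIcc p).1])
  have hkey : ∫ t in Ioc (-M) M, F t = ∫ p in Ioo (0:ℝ) 1, (qf F M p + M) :=
    (ENNReal.ofReal_eq_ofReal_iff hint_nonneg hint2_nonneg).1 (hA1.symm.trans hA2'')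
  rw [hkey, integral_add hIntqf (integrableOn_const (ne_of_lt
    (by rw [Real.volume_Ioo]; exact ENNReal.ofReal_lt_top)))]
  rw [setIntegral_const, Real.volume_real_Ioo]
  have hqfcongr : ∫ p in Ioo (0:ℝ) 1, qf F M p
      = ∫ p in Ioo (0:ℝ) 1, sSup {t | p ≤ F t} := by
    refine setIntegral_congr_fun measurableSet_Ioo (fun p hp => ?_)
    exact qf_eq F M p hp.1 (by rw [h1 (-M) le_rfl]; exact hp.2.le) h0
  rw [hqfcongr]
  simp
  ring

lemma choquet_eq_s11 {Ω : Type*} (F : Set (Set Ω)) (v : Set Ω → ℝ)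
    (hFempty : ∅ ∈ F) (hFuniv : Set.univ ∈ F)
    (hv0 : v ∅ = 0) (hv1 : v Set.univ = 1)
    (hvmono : ∀ A ∈ F, ∀ B ∈ F, A ⊆ B → v A ≤ v B)
    (f : Ω → ℝ) (M : ℝ) (hM : 0 ≤ M)
    (hf : ∀ ω, |f ω| ≤ M) (hfmeas : ∀ t : ℝ, {ω | t ≤ f ω} ∈ F) :
    choquet v f = ∫ p in Ioo (0:ℝ) 1, sSup {t | p ≤ v {ω | t ≤ f ω}} := by
  set Fv : ℝ → ℝ := fun t => v {ω | t ≤ f ω} with hFv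
  have hanti : Antitone Fv := by
    intro s t hst
    exact hvmono _ (hfmeas t) _ (hfmeas s) (fun ω hω => le_trans hst hω)
  have h1 : ∀ t, t ≤ -M → Fv t = 1 := by
    intro t ht
    have : {ω | t ≤ f ω} = Set.univ := by
      refine eq_univ_of_forall (fun ω => ?_)
      have := abs_le.1 (hf ω)
      simp only [mem_setOf_eq]
      linarith [this.1]
    rw [hFv]; simp only; rw [this, hv1]
  have h0 : ∀ t, M < t → Fv t = 0 := by
    intro t ht
    have : {ω | t ≤ f ω} = (∅ : Set Ω) := by
      refine eq_empty_iff_forall_notMem.2 (fun ω hω => ?_)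
      simp only [mem_setOf_eq] at hω
      have := abs_le.1 (hf ω)
      linarith [this.2]
    rw [hFv]; simp only; rw [this, hv0]
  have hFnn : ∀ t, 0 ≤ Fv t := by
    intro t
    rw [← hv0]
    exact hvmono _ hFempty _ (hfmeas t) (empty_subset _)
  have hFle1 : ∀ t, Fv t ≤ 1 := by
    intro t
    rw [← hv1]
    exact hvmono _ (hfmeas t) _ hFuniv (subset_univ _)
  have hbound : ∀ t, |Fv t| ≤ 1 := fun t => abs_le.2 ⟨by linarith [hFnn t], hFle1 t⟩
  have hIntIoc : ∀ x y : ℝ, IntegrableOn Fv (Ioc x y) :=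
    fun x y => integrableOn_of_antitone Fv hanti 1 hbound _
      (by rw [Real.volume_Ioc]; exact ENNReal.ofReal_lt_top)
  -- part 1
  have e1 : ∫ t in Iio (0:ℝ), (Fv t - 1) = (∫ t in Ioc (-M) 0, Fv t) - M := by
    rw [setIntegral_congr_set Iio_ae_eq_Iic, ← Iic_union_Ioc_eq_Iic (by linarith : -M ≤ (0:ℝ))]
    have hzero : EqOn (fun t => Fv t - 1) (fun _ => (0:ℝ)) (Iic (-M)) := by
      intro t ht
      simp only
      rw [h1 t ht]
      ring
    have hint1 : IntegrableOn (fun t => Fv t - 1) (Iic (-M)) :=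
      (integrableOn_congr_fun hzero measurableSet_Iic).2 (integrableOn_zero)
    have hint2 : IntegrableOn (fun t => Fv t - 1) (Ioc (-M) 0) := by
      refine (hIntIoc (-M) 0).sub ?_
      exact integrableOn_const (ne_of_lt (by rw [Real.volume_Ioc]; exact ENNReal.ofReal_lt_top))
    rw [setIntegral_union (Iic_disjoint_Ioc le_rfl) measurableSet_Ioc hint1 hint2]
    rw [setIntegral_congr_fun measurableSet_Iic hzero]
    have : ∫ t in Ioc (-M) (0:ℝ), (Fv t - 1) =
        (∫ t in Ioc (-M) (0:ℝ), Fv t) - ∫ t in Ioc (-M) (0:ℝ), (1:ℝ) := by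
      exact integral_sub (hIntIoc (-M) 0) (integrableOn_const (ne_of_lt
        (by rw [Real.volume_Ioc]; exact ENNReal.ofReal_lt_top)))
    rw [this]
    simp [setIntegral_const, Real.volume_Ioc, ENNReal.toReal_ofReal hM, hM]
  -- part 2
  have e2 : ∫ t in Ioi (0:ℝ), Fv t = ∫ t in Ioc 0 M, Fv t := by
    rw [← Ioc_union_Ioi_eq_Ioi hM]
    have hzero : EqOn Fv (fun _ => (0:ℝ)) (Ioi M) := fun t ht => h0 t ht
    have hint2 : IntegrableOn Fv (Ioi M) :=
      (integrableOn_congr_fun hzero measurableSet_Ioi).2 (integrableOn_zero)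
    rw [setIntegral_union (Ioc_disjoint_Ioi le_rfl) measurableSet_Ioi (hIntIoc 0 M) hint2]
    rw [setIntegral_congr_fun measurableSet_Ioi hzero]
    simp
  -- combine
  have e3 : (∫ t in Ioc (-M) (0:ℝ), Fv t) + ∫ t in Ioc (0:ℝ) M, Fv t
      = ∫ t in Ioc (-M) M, Fv t := by
    rw [← setIntegral_union (Ioc_disjoint_Ioc_of_le le_rfl) measurableSet_Ioc (hIntIoc (-M) 0)
      (hIntIoc 0 M), Ioc_union_Ioc_eq_Ioc (by linarith : -M ≤ (0:ℝ)) hM]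
  have := key_integral Fv M hM hanti h1 h0
  unfold choquet
  rw [e1, e2]
  have : (∫ t in Ioc (-M) 0, Fv t) - M + ∫ t in Ioc 0 M, Fv t
      = (∫ t in Ioc (-M) M, Fv t) - M := by rw [← e3]; ring
  rw [this, key_integral Fv M hM hanti h1 h0]
  ring

/-- the Choquet integral is comonotonically additive. -/
theorem choquet_comonotonic_additive
    {Ω : Type*} (F : Set (Set Ω)) (v : Set Ω → ℝ) (a b : Ω → ℝ) (Ma Mb : ℝ)
    -- F is an algebra of sets
    (hFempty : ∅ ∈ F) (hFuniv : Set.univ ∈ F)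
    (hFcompl : ∀ A ∈ F, Aᶜ ∈ F) (hFunion : ∀ A ∈ F, ∀ B ∈ F, A ∪ B ∈ F)
    -- v is a capacity
    (hv0 : v ∅ = 0) (hv1 : v Set.univ = 1)
    (hvmono : ∀ A ∈ F, ∀ B ∈ F, A ⊆ B → v A ≤ v B)
    -- a, b bounded and measurable
    (ha : ∀ ω, |a ω| ≤ Ma) (hb : ∀ ω, |b ω| ≤ Mb)
    (hameas : ∀ t : ℝ, {ω | t ≤ a ω} ∈ F)
    (hbmeas : ∀ t : ℝ, {ω | t ≤ b ω} ∈ F)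
    (habmeas : ∀ t : ℝ, {ω | t ≤ a ω + b ω} ∈ F)
    -- comonotonicity
    (hcomon : Comonotonic a b) :
    choquet v (fun ω => a ω + b ω) = choquet v a + choquet v b := by
  rcases isEmpty_or_nonempty Ω with hΩ | hΩ
  · exfalso
    have huniv : (Set.univ : Set Ω) = ∅ := Set.univ_eq_empty_iff.2 hΩ
    rw [huniv, hv0] at hv1
    exact zero_ne_one hv1
  obtain ⟨ω₀⟩ := hΩ
  have hMa : 0 ≤ Ma := le_trans (abs_nonneg _) (ha ω₀)
  have hMb : 0 ≤ Mb := le_trans (abs_nonneg _) (hb ω₀)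
  have hMc : 0 ≤ Ma + Mb := by linarith
  have hc : ∀ ω, |a ω + b ω| ≤ Ma + Mb :=
    fun ω => (abs_add_le _ _).trans (add_le_add (ha ω) (hb ω))
  -- the level sets of a and b form a single chain
  have nested : ∀ s t : ℝ, {ω | s ≤ a ω} ⊆ {ω | t ≤ b ω} ∨ {ω | t ≤ b ω} ⊆ {ω | s ≤ a ω} := by
    intro s t
    by_contra hcon
    push_neg at hcon
    obtain ⟨ω, hω, hωb⟩ := not_subset.1 hcon.1
    obtain ⟨ω', hω', hω'a⟩ := not_subset.1 hcon.2
    simp only [mem_setOf_eq] at hω hωb hω' hω'a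
    push_neg at hωb hω'a
    nlinarith [hcomon ω ω']
  rw [choquet_eq_s11 F v hFempty hFuniv hv0 hv1 hvmono _ (Ma+Mb) hMc hc habmeas,
      choquet_eq_s11 F v hFempty hFuniv hv0 hv1 hvmono a Ma hMa ha hameas,
      choquet_eq_s11 F v hFempty hFuniv hv0 hv1 hvmono b Mb hMb hb hbmeas]
  -- generic facts about the quantile sets
  have gen : ∀ p : ℝ, 0 < p → p < 1 → ∀ (f : Ω → ℝ) (Mf : ℝ), (∀ ω, |f ω| ≤ Mf) →
      (∀ t : ℝ, {ω | t ≤ f ω} ∈ F) →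
      p ≤ v {ω | -Mf ≤ f ω} ∧ ∀ t : ℝ, p ≤ v {ω | t ≤ f ω} → t ≤ Mf := by
    intro p hp0 hp1 f Mf hfb hfm
    constructor
    · have huniv' : {ω | -Mf ≤ f ω} = Set.univ := by
        refine eq_univ_of_forall fun ω => ?_
        have := abs_le.1 (hfb ω)
        simp only [mem_setOf_eq]
        linarith [this.1]
      rw [huniv', hv1]
      exact hp1.le
    · intro t ht
      by_contra hc'
      push_neg at hc'
      have hempty : {ω | t ≤ f ω} = (∅ : Set Ω) := by
        refine eq_empty_iff_forall_notMem.2 fun ω hω => ?_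
        simp only [mem_setOf_eq] at hω
        have := abs_le.1 (hfb ω)
        linarith [this.2]
      rw [hempty, hv0] at ht
      linarith
  -- pointwise additivity of quantile functions
  have hpoint : ∀ p ∈ Ioo (0:ℝ) 1,
      sSup {t | p ≤ v {ω | t ≤ a ω + b ω}} =
        sSup {t | p ≤ v {ω | t ≤ a ω}} + sSup {t | p ≤ v {ω | t ≤ b ω}} := by
    rintro p ⟨hp0, hp1⟩
    obtain ⟨nea, uba⟩ := gen p hp0 hp1 a Ma ha hameas
    obtain ⟨neb, ubb⟩ := gen p hp0 hp1 b Mb hb hbmeas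
    obtain ⟨nec, ubc⟩ := gen p hp0 hp1 (fun ω => a ω + b ω) (Ma+Mb) hc habmeas
    have hSane : ({t | p ≤ v {ω | t ≤ a ω}} : Set ℝ).Nonempty := ⟨-Ma, nea⟩
    have hSbne : ({t | p ≤ v {ω | t ≤ b ω}} : Set ℝ).Nonempty := ⟨-Mb, neb⟩
    have hScne : ({t | p ≤ v {ω | t ≤ a ω + b ω}} : Set ℝ).Nonempty := ⟨-(Ma+Mb), nec⟩
    have bda : BddAbove ({t | p ≤ v {ω | t ≤ a ω}} : Set ℝ) := ⟨Ma, fun t ht => uba t ht⟩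
    have bdb : BddAbove ({t | p ≤ v {ω | t ≤ b ω}} : Set ℝ) := ⟨Mb, fun t ht => ubb t ht⟩
    have bdc : BddAbove ({t | p ≤ v {ω | t ≤ a ω + b ω}} : Set ℝ) :=
      ⟨Ma+Mb, fun t ht => ubc t ht⟩
    have hadd : ∀ s ∈ ({t | p ≤ v {ω | t ≤ a ω}} : Set ℝ),
        ∀ t ∈ ({t | p ≤ v {ω | t ≤ b ω}} : Set ℝ),
        s + t ∈ ({t | p ≤ v {ω | t ≤ a ω + b ω}} : Set ℝ) := by
      intro s hs t ht
      simp only [mem_setOf_eq] at hs ht ⊢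
      rcases nested s t with hin | hin
      · have hsub : {ω | s ≤ a ω} ⊆ {ω | s + t ≤ a ω + b ω} := by
          intro ω hω
          have h2 := hin hω
          simp only [mem_setOf_eq] at hω h2 ⊢
          linarith
        exact le_trans hs (hvmono _ (hameas s) _ (habmeas (s+t)) hsub)
      · have hsub : {ω | t ≤ b ω} ⊆ {ω | s + t ≤ a ω + b ω} := by
          intro ω hω
          have h2 := hin hω
          simp only [mem_setOf_eq] at hω h2 ⊢
          linarith
        exact le_trans ht (hvmono _ (hbmeas t) _ (habmeas (s+t)) hsub)
    refine le_antisymm ?_ ?_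
    · -- sSup Sc ≤ sSup Sa + sSup Sb
      refine csSup_le hScne fun u hu => ?_
      by_contra hcon
      push_neg at hcon
      set s := sSup {t | p ≤ v {ω | t ≤ a ω}} +
        (u - sSup {t | p ≤ v {ω | t ≤ a ω}} - sSup {t | p ≤ v {ω | t ≤ b ω}})/2 with hsdef
      set t := u - s with htdef
      have hsgt : sSup {t | p ≤ v {ω | t ≤ a ω}} < s := by rw [hsdef]; linarith
      have htgt : sSup {t | p ≤ v {ω | t ≤ b ω}} < t := by rw [htdef, hsdef]; linarith
      have hFas : v {ω | s ≤ a ω} < p := by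
        by_contra hc'
        push_neg at hc'
        exact absurd (le_csSup bda (show s ∈ _ from hc')) (not_le.2 hsgt)
      have hFbt : v {ω | t ≤ b ω} < p := by
        by_contra hc'
        push_neg at hc'
        exact absurd (le_csSup bdb (show t ∈ _ from hc')) (not_le.2 htgt)
      have hsub : {ω | u ≤ a ω + b ω} ⊆ {ω | s ≤ a ω} ∪ {ω | t ≤ b ω} := by
        intro ω hω
        simp only [mem_setOf_eq, mem_union] at hω ⊢
        by_contra hc'
        push_neg at hc'
        have h1 := hc'.1
        have h2 := hc'.2
        have : s + t = u := by rw [htdef]; ring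
        linarith
      simp only [mem_setOf_eq] at hu
      rcases nested s t with hin | hin
      · have hsub2 : {ω | u ≤ a ω + b ω} ⊆ {ω | t ≤ b ω} :=
          fun ω hω => (hsub hω).elim (fun h => hin h) id
        have := hvmono _ (habmeas u) _ (hbmeas t) hsub2
        linarith
      · have hsub2 : {ω | u ≤ a ω + b ω} ⊆ {ω | s ≤ a ω} :=
          fun ω hω => (hsub hω).elim id (fun h => hin h)
        have := hvmono _ (habmeas u) _ (hameas s) hsub2
        linarith
    · -- sSup Sa + sSup Sb ≤ sSup Sc
      have step : ∀ t ∈ ({t | p ≤ v {ω | t ≤ b ω}} : Set ℝ),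
          sSup {t | p ≤ v {ω | t ≤ a ω}} + t ≤ sSup {t | p ≤ v {ω | t ≤ a ω + b ω}} := by
        intro t ht
        have : sSup {t | p ≤ v {ω | t ≤ a ω}} ≤
            sSup {t | p ≤ v {ω | t ≤ a ω + b ω}} - t := by
          refine csSup_le hSane fun s hs => ?_
          have := le_csSup bdc (hadd s hs t ht)
          linarith
        linarith
      have : sSup {t | p ≤ v {ω | t ≤ b ω}} ≤
          sSup {t | p ≤ v {ω | t ≤ a ω + b ω}} - sSup {t | p ≤ v {ω | t ≤ a ω}} := by
        refine csSup_le hSbne fun t ht => ?_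
        have := step t ht
        linarith
      linarith
  -- integrability of the quantile functions
  have geneq : ∀ (f : Ω → ℝ) (Mf : ℝ), 0 ≤ Mf → (∀ ω, |f ω| ≤ Mf) →
      (∀ t : ℝ, {ω | t ≤ f ω} ∈ F) →
      IntegrableOn (fun p => sSup {t | p ≤ v {ω | t ≤ f ω}}) (Ioo (0:ℝ) 1) := by
    intro f Mf hMf hfb hfm
    have heq : EqOn (fun p => sSup {t | p ≤ v {ω | t ≤ f ω}})
        (qf (fun t => v {ω | t ≤ f ω}) Mf) (Ioo (0:ℝ) 1) := by
      intro p hp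
      obtain ⟨hfuniv, hub⟩ := gen p hp.1 hp.2 f Mf hfb hfm
      have h0' : ∀ t : ℝ, Mf < t → v {ω | t ≤ f ω} = 0 := by
        intro t htMf
        have hempty : {ω | t ≤ f ω} = (∅ : Set Ω) := by
          refine eq_empty_iff_forall_notMem.2 fun ω hω => ?_
          simp only [mem_setOf_eq] at hω
          have := abs_le.1 (hfb ω)
          linarith [this.2]
        rw [hempty, hv0]
      exact (qf_eq (fun t => v {ω | t ≤ f ω}) Mf p hp.1 hfuniv h0').symm
    refine (integrableOn_congr_fun heq measurableSet_Ioo).2 ?_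
    refine integrableOn_of_antitone _ (qf_antitone _ _ hMf) Mf
      (fun p => abs_le.2 ⟨(qf_mem_Icc _ _ hMf p).1, (qf_mem_Icc _ _ hMf p).2⟩) _
      (by rw [Real.volume_Ioo]; exact ENNReal.ofReal_lt_top)
  rw [setIntegral_congr_fun measurableSet_Ioo hpoint]
  exact integral_add (geneq a Ma hMa ha hameas) (geneq b Mb hMb hb hbmeas)
end

section
/- Let v be a convex capacity on a finite algebra F. Then for every bounded measurable f, the Choquet integral equals the minimum of expectations over the core: ∫f dv = min_{P ∈ core(v)} E_P[f], and in particular core(v) is nonempty. -/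
open MeasureTheory

open Set

open scoped Classical in
/-- Expectation of a (finite-range) function with respect to a finitely additive
set function `P`: `∑ y ∈ range f, y * P (f ⁻¹' {y})`. -/
noncomputable def expFA {Ω : Type*} (P : Set Ω → ℝ) (f : Ω → ℝ) : ℝ :=
  if hf : (Set.range f).Finite then ∑ y ∈ hf.toFinset, y * P (f ⁻¹' {y}) else 0

/-- The core of a capacity `v` on the algebra `F`: all finitely additive
probabilities on `F` dominating `v` on `F`. -/
def core {Ω : Type*} (F : Set (Set Ω)) (v : Set Ω → ℝ) : Set (Set Ω → ℝ) :=
  {P | P ∅ = 0 ∧ P Set.univ = 1 ∧ (∀ A ∈ F, 0 ≤ P A) ∧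
    (∀ A ∈ F, ∀ B ∈ F, Disjoint A B → P (A ∪ B) = P A + P B) ∧
    (∀ A ∈ F, v A ≤ P A)}



lemma H1_spec (a : ℝ) :
    Integrable (fun t => (if t ≤ a then (1:ℝ) else 0) - (if t < 0 then 1 else 0)) volume ∧
    (∫ t, ((if t ≤ a then (1:ℝ) else 0) - (if t < 0 then 1 else 0))) = a := by
  rcases le_or_gt 0 a with h | h
  · have he : (fun t => (if t ≤ a then (1:ℝ) else 0) - (if t < 0 then (1:ℝ) else 0))
        = (Icc (0:ℝ) a).indicator (fun _ => (1:ℝ)) := by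
      funext t
      simp only [Set.indicator_apply, Set.mem_Icc]
      split_ifs <;> simp_all <;> linarith
    constructor
    · rw [he, integrable_indicator_iff measurableSet_Icc]
      exact integrableOn_const (by rw [Real.volume_Icc]; exact ENNReal.ofReal_ne_top)
    · rw [he, integral_indicator_const _ measurableSet_Icc, measureReal_def, Real.volume_Icc,
        ENNReal.toReal_ofReal (by linarith), smul_eq_mul, mul_one, sub_zero]
  · have he : (fun t => (if t ≤ a then (1:ℝ) else 0) - (if t < 0 then (1:ℝ) else 0))
        = (Ioo a (0:ℝ)).indicator (fun _ => (-1:ℝ)) := by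
      funext t
      simp only [Set.indicator_apply, Set.mem_Ioo]
      split_ifs <;> simp_all <;> linarith
    constructor
    · rw [he, integrable_indicator_iff measurableSet_Ioo]
      exact integrableOn_const (by rw [Real.volume_Ioo]; exact ENNReal.ofReal_ne_top)
    · rw [he, integral_indicator_const _ measurableSet_Ioo, measureReal_def, Real.volume_Ioo,
        ENNReal.toReal_ofReal (by linarith), smul_eq_mul]
      ring

lemma abel_sum (m : ℕ) (hm : 1 ≤ m) (y p : ℕ → ℝ) :
    ∑ i ∈ Finset.range m, y i * (p i - p (i+1))
      = y 0 * p 0 - y (m-1) * p m + ∑ i ∈ Finset.Ico 1 m, (y i - y (i-1)) * p i := by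
  induction m, hm using Nat.le_induction with
  | base => simp; ring
  | succ m hm ih =>
      rw [Finset.sum_range_succ, ih, Finset.sum_Ico_succ_top hm]
      simp only [Nat.add_sub_cancel]
      have h1 : 1 ≤ m := hm
      ring

lemma list_sum_getD {α β : Type*} [AddCommMonoid β] (g : α → β) (d : α) :
    ∀ l : List α, (l.map g).sum = ∑ i ∈ Finset.range l.length, g (l.getD i d)
  | [] => by simp
  | a :: l => by
      rw [List.map_cons, List.sum_cons, list_sum_getD g d l, List.length_cons,
        Finset.sum_range_succ']
      simp [List.getD_cons_succ, List.getD_cons_zero, add_comm]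

lemma down_closed_range {n : ℕ} (p : ℕ → Prop)
    (hdc : ∀ i j, i ≤ j → j < n → p j → p i) :
    ∃ k ≤ n, ∀ j < n, (p j ↔ j < k) := by
  classical
  by_cases hall : ∀ j < n, p j
  · exact ⟨n, le_rfl, fun j hj => ⟨fun _ => hj, fun _ => hall j hj⟩⟩
  · push_neg at hall
    obtain ⟨j0, hj0, hpj0⟩ := hall
    have hex : ∃ j, j < n ∧ ¬ p j := ⟨j0, hj0, hpj0⟩
    have hspec := Nat.find_spec hex
    refine ⟨Nat.find hex, le_of_lt hspec.1, fun j hj => ?_⟩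
    constructor
    · intro hpj
      by_contra hjk
      push_neg at hjk
      exact hspec.2 (hdc (Nat.find hex) j hjk hj hpj)
    · intro hjk
      have hmin := Nat.find_min hex hjk
      by_contra hpj
      exact hmin ⟨hj, hpj⟩

lemma integral_step (m : ℕ) (hm : 0 < m) (y : ℕ → ℝ)
    (hy : ∀ i j, i < j → j < m → y i < y j) (c : ℕ → ℝ) (G : ℝ → ℝ)
    (h1 : ∀ t, t ≤ y 0 → G t = 1)
    (h2 : ∀ i, 1 ≤ i → i < m → ∀ t, y (i-1) < t → t ≤ y i → G t = c i)
    (h3 : ∀ t, y (m-1) < t → G t = 0) :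
    ((∫ t in Set.Iio (0:ℝ), (G t - 1)) + ∫ t in Set.Ioi (0:ℝ), G t)
      = y 0 + ∑ i ∈ Finset.Ico 1 m, (y i - y (i-1)) * c i := by
  classical
  have hymono : ∀ i j, i ≤ j → j < m → y i ≤ y j := by
    intro i j hij hj
    rcases hij.lt_or_eq with h | h
    · exact (hy i j h hj).le
    · rw [h]
  set H : ℝ → ℝ := fun t => G t - (if t < 0 then 1 else 0) with hH
  have hdec : ∀ t, H t = ((if t ≤ y 0 then (1:ℝ) else 0) - (if t < 0 then 1 else 0))
      + ∑ i ∈ Finset.Ico 1 m, (Ioc (y (i-1)) (y i)).indicator (fun _ => c i) t := by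
    intro t
    by_cases ht0 : t ≤ y 0
    · have hG : G t = 1 := h1 t ht0
      have hz : ∀ i ∈ Finset.Ico 1 m,
          (Ioc (y (i-1)) (y i)).indicator (fun _ => c i) t = 0 := by
        intro i hi
        rw [Finset.mem_Ico] at hi
        apply Set.indicator_of_notMem
        rw [Set.mem_Ioc]
        push_neg
        intro hlt
        exact absurd (ht0.trans (hymono 0 (i-1) (Nat.zero_le _) (by omega))) (not_le.2 hlt)
      rw [Finset.sum_congr rfl hz]
      simp [hH, hG, ht0]
    · push_neg at ht0
      by_cases htm : y (m-1) < t
      · have hG := h3 t htm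
        have hz : ∀ i ∈ Finset.Ico 1 m,
            (Ioc (y (i-1)) (y i)).indicator (fun _ => c i) t = 0 := by
          intro i hi
          rw [Finset.mem_Ico] at hi
          apply Set.indicator_of_notMem
          rw [Set.mem_Ioc]
          push_neg
          intro _
          exact lt_of_le_of_lt (hymono i (m-1) (by omega) (by omega)) htm
        rw [Finset.sum_congr rfl hz]
        simp [hH, hG, not_le.2 ht0]
      · push_neg at htm
        have hex : ∃ i, i < m ∧ t ≤ y i := ⟨m-1, by omega, htm⟩
        set i := Nat.find hex with hidef
        have hspec := Nat.find_spec hex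
        have hsp2 : t ≤ y i := hspec.2
        have hi1 : 1 ≤ i := by
          rcases Nat.eq_zero_or_pos i with h | h
          · exfalso
            rw [h] at hsp2
            exact absurd hsp2 (not_le.2 ht0)
          · exact h
        have him : i < m := hspec.1
        have hlow : y (i-1) < t := by
          have hmin := Nat.find_min hex (show i-1 < i by omega)
          by_contra hc
          push_neg at hc
          exact hmin ⟨by omega, hc⟩
        have hG := h2 i hi1 him t hlow hspec.2
        have hsum : ∑ j ∈ Finset.Ico 1 m,
            (Ioc (y (j-1)) (y j)).indicator (fun _ => c j) t = c i := by
          rw [Finset.sum_eq_single_of_mem i (Finset.mem_Ico.2 ⟨hi1, him⟩)]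
          · exact Set.indicator_of_mem (Set.mem_Ioc.2 ⟨hlow, hsp2⟩) _
          · intro j hj hne
            rw [Finset.mem_Ico] at hj
            apply Set.indicator_of_notMem
            rw [Set.mem_Ioc]
            rcases lt_or_gt_of_ne hne with hji | hij
            · have hmin := Nat.find_min hex hji
              push_neg at hmin
              intro hc
              exact absurd (hmin hj.2) (not_lt.2 hc.2)
            · push_neg
              intro hlt
              exfalso
              exact absurd (hsp2.trans (hymono i (j-1) (by omega) (by omega))) (not_le.2 hlt)
        rw [hsum]
        simp only [hH, hG, if_neg (not_le.2 ht0)]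
        ring
  have hint1 := H1_spec (y 0)
  have hintInd : ∀ i ∈ Finset.Ico 1 m,
      Integrable ((Ioc (y (i-1)) (y i)).indicator (fun _ => c i)) volume := by
    intro i _
    rw [integrable_indicator_iff measurableSet_Ioc]
    exact integrableOn_const (by rw [Real.volume_Ioc]; exact ENNReal.ofReal_ne_top)
  have hintsum : Integrable
      (fun t => ∑ i ∈ Finset.Ico 1 m, (Ioc (y (i-1)) (y i)).indicator (fun _ => c i) t)
      volume := integrable_finset_sum _ hintInd
  have hHint : Integrable H volume := by
    have he : H = fun t => ((if t ≤ y 0 then (1:ℝ) else 0) - (if t < 0 then 1 else 0))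
        + ∑ i ∈ Finset.Ico 1 m, (Ioc (y (i-1)) (y i)).indicator (fun _ => c i) t :=
      funext hdec
    rw [he]
    exact hint1.1.add hintsum
  have e1 : (∫ t in Set.Iio (0:ℝ), (G t - 1)) = ∫ t in Set.Iio (0:ℝ), H t :=
    setIntegral_congr_fun measurableSet_Iio (fun t ht => by
      simp [hH, if_pos (Set.mem_Iio.mp ht)])
  have e2 : (∫ t in Set.Ioi (0:ℝ), G t) = ∫ t in Set.Ioi (0:ℝ), H t :=
    setIntegral_congr_fun measurableSet_Ioi (fun t ht => by
      simp [hH, if_neg (not_lt.2 (le_of_lt (Set.mem_Ioi.mp ht)))])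
  have e3 : (∫ t in Set.Ioi (0:ℝ), H t) = ∫ t in Set.Ici (0:ℝ), H t :=
    setIntegral_congr_set MeasureTheory.Ioi_ae_eq_Ici
  have e4 : ((∫ t in Set.Iio (0:ℝ), H t) + ∫ t in Set.Ici (0:ℝ), H t) = ∫ t, H t := by
    have h := integral_add_compl (measurableSet_Iio (a := (0:ℝ))) hHint
    rwa [compl_Iio] at h
  rw [e1, e2, e3, e4]
  have e5 : (∫ t, H t)
      = (∫ t, ((if t ≤ y 0 then (1:ℝ) else 0) - (if t < 0 then 1 else 0)))
        + ∫ t, (∑ i ∈ Finset.Ico 1 m, (Ioc (y (i-1)) (y i)).indicator (fun _ => c i) t) := by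
    rw [← integral_add hint1.1 hintsum]
    exact integral_congr_ae (Filter.EventuallyEq.of_eq (funext hdec))
  rw [e5, hint1.2, integral_finset_sum _ hintInd]
  congr 1
  apply Finset.sum_congr rfl
  intro i hi
  rw [Finset.mem_Ico] at hi
  rw [integral_indicator_const _ measurableSet_Ioc, measureReal_def, Real.volume_Ioc,
    ENNReal.toReal_ofReal (by linarith [hy (i-1) i (by omega) hi.2]), smul_eq_mul, mul_comm]

/-- Schmeidler: for a convex capacity `v` on a finite algebra `F`,
the Choquet integral of every bounded measurable `f` is the minimum of `E_P[f]`
over the core of `v`; in particular the core is nonempty. -/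
theorem choquet_eq_min_core
    {Ω : Type*} (F : Set (Set Ω)) (v : Set Ω → ℝ) (f : Ω → ℝ) (M : ℝ)
    -- F is a finite algebra of sets
    (hFfin : F.Finite)
    (hFempty : ∅ ∈ F) (hFuniv : Set.univ ∈ F)
    (hFcompl : ∀ A ∈ F, Aᶜ ∈ F) (hFunion : ∀ A ∈ F, ∀ B ∈ F, A ∪ B ∈ F)
    -- v is a convex capacity
    (hv0 : v ∅ = 0) (hv1 : v Set.univ = 1)
    (hvmono : ∀ A ∈ F, ∀ B ∈ F, A ⊆ B → v A ≤ v B)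
    (hconvex : ∀ A ∈ F, ∀ B ∈ F, v A + v B ≤ v (A ∪ B) + v (A ∩ B))
    -- f bounded, simple and F-measurable
    (hf : ∀ ω, |f ω| ≤ M) (hffin : (Set.range f).Finite)
    (hfmeas : ∀ t : ℝ, {ω | t ≤ f ω} ∈ F) (hfpre : ∀ y : ℝ, f ⁻¹' {y} ∈ F) :
    IsLeast ((fun P => expFA P f) '' core F v) (choquet v f) := by
  classical
  have hΩ : Nonempty Ω := by
    by_contra h
    rw [not_nonempty_iff] at h
    have he : (Set.univ : Set Ω) = ∅ := Set.univ_eq_empty_iff.2 h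
    rw [he, hv0] at hv1
    norm_num at hv1
  obtain ⟨ω₀⟩ := hΩ
  have hFinter : ∀ A ∈ F, ∀ B ∈ F, A ∩ B ∈ F := by
    intro A hA B hB
    have h := hFcompl _ (hFunion _ (hFcompl A hA) _ (hFcompl B hB))
    rwa [Set.compl_union, compl_compl, compl_compl] at h
  set l : List ℝ := hffin.toFinset.sort (· ≤ ·) with hl
  set m := l.length with hmdef
  set y : ℕ → ℝ := fun i => l.getD i 0 with hydef
  have hmem_l : ∀ z, z ∈ l ↔ z ∈ Set.range f := by
    intro z
    rw [hl, Finset.mem_sort, Set.Finite.mem_toFinset]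
  have hm : 0 < m := by
    rw [hmdef]
    exact List.length_pos_iff.2 (List.ne_nil_of_mem ((hmem_l (f ω₀)).2 ⟨ω₀, rfl⟩))
  have hy_lt : ∀ i j, i < j → j < m → y i < y j := by
    intro i j hij hj
    have hs : List.Pairwise (· < ·) l := by rw [hl]; exact (Finset.sortedLT_sort _).pairwise
    have h := List.pairwise_iff_get.1 hs ⟨i, by omega⟩ ⟨j, by omega⟩ (Fin.mk_lt_mk.2 hij)
    simpa [hydef, List.getD, List.getElem?_eq_getElem (show i < l.length by omega),
      List.getElem?_eq_getElem (show j < l.length by omega), List.get_eq_getElem] using h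
  have hy_le : ∀ i j, i ≤ j → j < m → y i ≤ y j := by
    intro i j hij hj
    rcases eq_or_lt_of_le hij with rfl | h
    · exact le_rfl
    · exact (hy_lt i j h hj).le
  have hrange : ∀ ω, ∃ j, j < m ∧ f ω = y j := by
    intro ω
    have hmem : f ω ∈ l := (hmem_l _).2 ⟨ω, rfl⟩
    obtain ⟨j, hj, he⟩ := List.mem_iff_getElem.1 hmem
    exact ⟨j, hj, by rw [hydef]; simp only; rw [List.getD_eq_getElem _ _ hj, he]⟩
  have hy0_le : ∀ ω, y 0 ≤ f ω := by
    intro ω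
    obtain ⟨j, hj, he⟩ := hrange ω
    rw [he]
    exact hy_le 0 j (Nat.zero_le _) hj
  set B : ℕ → Set Ω := fun i => {ω | y i ≤ f ω} with hB
  have hBF : ∀ i, B i ∈ F := fun i => hfmeas (y i)
  have hB0 : B 0 = Set.univ := Set.eq_univ_of_forall hy0_le
  have hG : ∀ w : Set Ω → ℝ, w ∅ = 0 → w Set.univ = 1 →
      choquet w f = y 0 + ∑ i ∈ Finset.Ico 1 m, (y i - y (i-1)) * w (B i) := by
    intro w hw0 hw1
    have h1 : ∀ t : ℝ, t ≤ y 0 → w {ω | t ≤ f ω} = 1 := by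
      intro t ht
      have he : {ω | t ≤ f ω} = Set.univ :=
        Set.eq_univ_of_forall (fun ω => le_trans ht (hy0_le ω))
      rw [he, hw1]
    have h2 : ∀ i, 1 ≤ i → i < m → ∀ t : ℝ, y (i-1) < t → t ≤ y i →
        w {ω | t ≤ f ω} = w (B i) := by
      intro i hi1 him t hlo hhi
      congr 1
      ext ω
      simp only [Set.mem_setOf_eq, hB]
      constructor
      · intro htf
        obtain ⟨j, hj, he⟩ := hrange ω
        rw [he] at htf ⊢
        have hji : ¬ j ≤ i - 1 := by
          intro hle
          exact absurd ((hy_le j (i-1) hle (by omega)).trans_lt hlo) (not_lt.2 htf)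
        exact hy_le i j (by omega) hj
      · intro hyi
        exact hhi.trans hyi
    have h3 : ∀ t : ℝ, y (m-1) < t → w {ω | t ≤ f ω} = 0 := by
      intro t ht
      have he : {ω | t ≤ f ω} = (∅ : Set Ω) := by
        rw [Set.eq_empty_iff_forall_notMem]
        intro ω hω
        obtain ⟨j, hj, hej⟩ := hrange ω
        have : f ω ≤ y (m-1) := by rw [hej]; exact hy_le j (m-1) (by omega) (by omega)
        exact absurd (le_trans hω this : t ≤ y (m-1)) (not_le.2 ht)
      rw [he, hw0]
    exact integral_step m hm y hy_lt (fun i => w (B i)) (fun t => w {ω | t ≤ f ω}) h1 h2 h3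
  have hexp_form : ∀ Q : Set Ω → ℝ, Q ∈ core F v →
      expFA Q f = y 0 + ∑ i ∈ Finset.Ico 1 m, (y i - y (i-1)) * Q (B i) := by
    intro Q hQ
    obtain ⟨hQ0, hQ1, hQpos, hQadd, hQdom⟩ := hQ
    set p : ℕ → ℝ := fun i => if i < m then Q (B i) else 0 with hp
    have hpre : ∀ i, i < m → Q (f ⁻¹' {y i}) = p i - p (i+1) := by
      intro i hi
      by_cases hi1 : i + 1 < m
      · have hsplit : B i = f ⁻¹' {y i} ∪ B (i+1) := by
          ext ω
          simp only [hB, Set.mem_setOf_eq, Set.mem_union, Set.mem_preimage,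
            Set.mem_singleton_iff]
          constructor
          · intro hyi
            rcases eq_or_lt_of_le hyi with he2 | hlt2
            · exact Or.inl he2.symm
            · right
              obtain ⟨j, hj, he⟩ := hrange ω
              rw [he] at hlt2 ⊢
              have hji : ¬ j ≤ i := by
                intro hle
                exact absurd (hy_le j i hle hi) (not_le.2 hlt2)
              exact hy_le (i+1) j (by omega) hj
          · rintro (he | hyi)
            · exact le_of_eq he.symm
            · exact (hy_le i (i+1) (by omega) hi1).trans hyi
        have hdisj : Disjoint (f ⁻¹' {y i}) (B (i+1)) := by
          rw [Set.disjoint_left]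
          intro ω h1 h2
          rw [Set.mem_preimage, Set.mem_singleton_iff] at h1
          have h2' : y (i+1) ≤ f ω := h2
          rw [h1] at h2'
          exact absurd h2' (not_le.2 (hy_lt i (i+1) (by omega) hi1))
        have hadd := hQadd _ (hfpre (y i)) _ (hBF (i+1)) hdisj
        rw [← hsplit] at hadd
        rw [hp]
        simp only [if_pos hi, if_pos hi1]
        linarith
      · have hpre_eq : f ⁻¹' {y i} = B i := by
          ext ω
          simp only [Set.mem_preimage, Set.mem_singleton_iff, hB, Set.mem_setOf_eq]
          constructor
          · intro he
            exact le_of_eq he.symm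
          · intro hyi
            obtain ⟨j, hj, he⟩ := hrange ω
            have hf2 : f ω ≤ y i := by
              rw [he]
              exact hy_le j i (by omega) hi
            exact le_antisymm hf2 hyi
        rw [hpre_eq, hp]
        simp only [if_pos hi, if_neg (show ¬ i + 1 < m by omega), sub_zero]
    rw [expFA, dif_pos hffin]
    have htf : hffin.toFinset = l.toFinset := by
      rw [hl, Finset.sort_toFinset]
    rw [htf, List.sum_toFinset _ (by rw [hl]; exact Finset.sort_nodup _ _),
      list_sum_getD _ (0:ℝ) l]
    have hsc : ∀ i ∈ Finset.range m, (fun z => z * Q (f ⁻¹' {z})) (l.getD i 0)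
        = y i * (p i - p (i+1)) := by
      intro i hi
      rw [Finset.mem_range] at hi
      have hee : l.getD i 0 = y i := rfl
      simp only
      rw [hee, hpre i hi]
    rw [← hmdef, Finset.sum_congr rfl hsc, abel_sum m hm y p]
    have hp0 : p 0 = 1 := by rw [hp]; simp only [if_pos hm]; rw [hB0, hQ1]
    have hpm : p m = 0 := by simp only [hp]; rw [if_neg (lt_irrefl m)]
    rw [hp0, hpm]
    have hpi : ∀ i ∈ Finset.Ico 1 m, (y i - y (i-1)) * p i = (y i - y (i-1)) * Q (B i) := by
      intro i hi
      rw [Finset.mem_Ico] at hi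
      rw [hp]
      simp only [if_pos hi.2]
    rw [Finset.sum_congr rfl hpi]
    ring
  constructor
  · -- membership: construct the minimizing P from a chain of atoms
    set atomOf : Ω → Set Ω := fun ω => ⋂₀ {A | A ∈ F ∧ ω ∈ A} with hatomdef
    have hself : ∀ ω, ω ∈ atomOf ω := fun ω => Set.mem_sInter.2 (fun A hA => hA.2)
    have hsub : ∀ ω A, A ∈ F → ω ∈ A → atomOf ω ⊆ A :=
      fun ω A hAF hωA => Set.sInter_subset_of_mem ⟨hAF, hωA⟩
    have hatomF : ∀ ω, atomOf ω ∈ F := by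
      intro ω
      have hfin : {A | A ∈ F ∧ ω ∈ A}.Finite := hFfin.subset (fun A hA => hA.1)
      have hgen : ∀ S : Set (Set Ω), S.Finite → (S ⊆ F → ⋂₀ S ∈ F) := by
        intro S hS
        refine Set.Finite.induction_on S hS ?_ ?_
        · intro _
          rw [Set.sInter_empty]
          exact hFuniv
        · intro A S' _ _ ih hsub'
          rw [Set.sInter_insert]
          exact hFinter _ (hsub' (Set.mem_insert _ _)) _
            (ih (fun X hX => hsub' (Set.mem_insert_of_mem _ hX)))
      exact hgen _ hfin (fun A hA => hA.1)
    have hcases : ∀ ω A, A ∈ F → atomOf ω ⊆ A ∨ atomOf ω ∩ A = ∅ := by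
      intro ω A hA
      by_cases hω : ω ∈ A
      · exact Or.inl (hsub ω A hA hω)
      · right
        have h2 : atomOf ω ⊆ Aᶜ := hsub ω Aᶜ (hFcompl A hA) hω
        rw [Set.eq_empty_iff_forall_notMem]
        intro x hx
        exact h2 hx.1 hx.2
    have heqatom : ∀ ω ω', ω' ∈ atomOf ω → atomOf ω' = atomOf ω := by
      intro ω ω' hm'
      apply Set.Subset.antisymm
      · exact hsub ω' _ (hatomF ω) hm'
      · apply Set.subset_sInter
        rintro A ⟨hAF, hω'A⟩
        by_cases hωA : ω ∈ A
        · exact hsub ω A hAF hωA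
        · exact absurd hω'A ((hsub ω Aᶜ (hFcompl A hAF) hωA) hm')
    have hconst : ∀ ω ω', ω' ∈ atomOf ω → f ω' = f ω := by
      intro ω ω' hm'
      exact Set.mem_singleton_iff.1 (hsub ω (f ⁻¹' {f ω}) (hfpre (f ω)) rfl hm')
    have hAtfin : (Set.range atomOf).Finite :=
      hFfin.subset (by rintro _ ⟨ω, rfl⟩; exact hatomF ω)
    set key : Set Ω → ℝ := fun a => sInf (f '' a) with hkeydef
    have hkey : ∀ ω, key (atomOf ω) = f ω := by
      intro ω
      have himg : f '' atomOf ω = {f ω} := by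
        apply Set.Subset.antisymm
        · rintro _ ⟨ω', hω', rfl⟩
          exact hconst ω ω' hω'
        · rintro x hx
          rw [Set.mem_singleton_iff] at hx
          exact ⟨ω, hself ω, hx.symm⟩
      simp only [hkeydef]
      rw [himg, csInf_singleton]
    set L : List (Set Ω) := hAtfin.toFinset.toList.mergeSort
      (fun a b => decide (key b ≤ key a)) with hLdef
    have hperm : L.Perm hAtfin.toFinset.toList := List.mergeSort_perm _ _
    have hLnodup : L.Nodup := hperm.nodup_iff.2 (Finset.nodup_toList _)
    have hLmem : ∀ s, s ∈ L ↔ s ∈ Set.range atomOf := by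
      intro s
      rw [hperm.mem_iff, Finset.mem_toList, Set.Finite.mem_toFinset]
    have hLsorted : L.Pairwise (fun s s' => key s' ≤ key s) := by
      have hs := List.pairwise_mergeSort
        (le := fun (s s' : Set Ω) => decide (key s' ≤ key s))
        (fun s s' s'' h1 h2 => by
          simp only [decide_eq_true_eq] at h1 h2 ⊢
          exact h2.trans h1)
        (fun s s' => by
          simp only [Bool.or_eq_true, decide_eq_true_eq]
          exact le_total (key s') (key s))
        hAtfin.toFinset.toList
      rw [← hLdef] at hs
      exact hs.imp (fun h => by simpa using h)
    set n := L.length with hndef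
    set a : ℕ → Set Ω := fun i => L.getD i ∅ with hadef
    have ha_get : ∀ i (hi : i < n), a i = L[i] := by
      intro i hi
      simp only [hadef]
      rw [List.getD_eq_getElem _ _ hi]
    have ha_atom : ∀ i, i < n → ∃ ω, a i = atomOf ω := by
      intro i hi
      have hmem : a i ∈ L := by rw [ha_get i hi]; exact List.getElem_mem _
      obtain ⟨ω, hω⟩ := (hLmem _).1 hmem
      exact ⟨ω, hω.symm⟩
    have ha_inj : ∀ i j, i < n → j < n → a i = a j → i = j := by
      intro i j hi hj he
      rw [ha_get i hi, ha_get j hj] at he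
      exact (List.Nodup.getElem_inj_iff hLnodup).1 he
    have ha_ne : ∀ i, i < n → (a i).Nonempty := by
      intro i hi
      obtain ⟨ω, hω⟩ := ha_atom i hi
      exact ⟨ω, hω ▸ hself ω⟩
    have hkeymono : ∀ i j, i ≤ j → j < n → key (a j) ≤ key (a i) := by
      intro i j hij hj
      rcases eq_or_lt_of_le hij with rfl | h
      · exact le_rfl
      · have hp := List.pairwise_iff_get.1 hLsorted ⟨i, by omega⟩ ⟨j, by omega⟩
          (Fin.mk_lt_mk.2 h)
        rw [ha_get i (by omega), ha_get j (by omega)]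
        simpa [List.get_eq_getElem] using hp
    set S : ℕ → Set Ω := fun k => {ω | ∃ i, i < k ∧ ω ∈ a i} with hSdef
    have hS0 : S 0 = ∅ := by
      simp only [hSdef]
      ext x
      simp
    have hSsucc : ∀ k, S (k+1) = S k ∪ a k := by
      intro k
      ext ω
      simp only [hSdef, Set.mem_setOf_eq, Set.mem_union]
      constructor
      · rintro ⟨i, hik, hω⟩
        rcases Nat.lt_succ_iff_lt_or_eq.1 hik with h | h
        · exact Or.inl ⟨i, h, hω⟩
        · exact Or.inr (h ▸ hω)
      · rintro (⟨i, hik, hω⟩ | hω)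
        · exact ⟨i, Nat.lt_succ_of_lt hik, hω⟩
        · exact ⟨k, Nat.lt_succ_self k, hω⟩
    have haF : ∀ i, a i ∈ F := by
      intro i
      by_cases hi : i < n
      · obtain ⟨ω, hω⟩ := ha_atom i hi
        rw [hω]
        exact hatomF ω
      · simp only [hadef]
        rw [List.getD_eq_default _ _ (by omega)]
        exact hFempty
    have hSF : ∀ k, S k ∈ F := by
      intro k
      induction k with
      | zero => rw [hS0]; exact hFempty
      | succ k ih => rw [hSsucc]; exact hFunion _ ih _ (haF k)
    have hSmono : ∀ k, S k ⊆ S (k+1) := by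
      intro k
      rw [hSsucc]
      exact Set.subset_union_left
    have hSn : S n = Set.univ := by
      rw [Set.eq_univ_iff_forall]
      intro ω
      have hmem : atomOf ω ∈ L := (hLmem _).2 ⟨ω, rfl⟩
      obtain ⟨i, hi, he⟩ := List.mem_iff_getElem.1 hmem
      exact ⟨i, hi, by rw [ha_get i hi, he]; exact hself ω⟩
    set w : ℕ → ℝ := fun i => v (S (i+1)) - v (S i) with hwdef
    have hw0 : ∀ i, 0 ≤ w i :=
      fun i => sub_nonneg.2 (hvmono _ (hSF i) _ (hSF (i+1)) (hSmono i))
    set P : Set Ω → ℝ := fun E => ∑ i ∈ Finset.range n, if a i ⊆ E then w i else 0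
      with hPdef
    have hP0 : P ∅ = 0 := by
      simp only [hPdef]
      apply Finset.sum_eq_zero
      intro i hi
      rw [Finset.mem_range] at hi
      obtain ⟨x, hx⟩ := ha_ne i hi
      rw [if_neg (fun hsub' => (hsub' hx : x ∈ (∅ : Set Ω)))]
    have htele : ∀ k, ∑ i ∈ Finset.range k, w i = v (S k) := by
      intro k
      have h := Finset.sum_range_sub (fun i => v (S i)) k
      simp only [hwdef]
      rw [h, hS0, hv0, sub_zero]
    have hP1 : P Set.univ = 1 := by
      simp only [hPdef]
      have hone : ∀ i ∈ Finset.range n, (if a i ⊆ Set.univ then w i else 0) = w i := by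
        intro i _
        rw [if_pos (Set.subset_univ _)]
      rw [Finset.sum_congr rfl hone, htele, hSn, hv1]
    have hPpos : ∀ A ∈ F, 0 ≤ P A := by
      intro A _
      simp only [hPdef]
      apply Finset.sum_nonneg
      intro i _
      split_ifs
      · exact hw0 i
      · exact le_rfl
    have hPadd : ∀ A ∈ F, ∀ B' ∈ F, Disjoint A B' → P (A ∪ B') = P A + P B' := by
      intro A hA B' hB' hd
      simp only [hPdef]
      rw [← Finset.sum_add_distrib]
      apply Finset.sum_congr rfl
      intro i hi
      rw [Finset.mem_range] at hi
      obtain ⟨ω, hω⟩ := ha_atom i hi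
      obtain ⟨x, hx⟩ := ha_ne i hi
      rcases hcases ω A hA with h1 | h1 <;> rcases hcases ω B' hB' with h2 | h2 <;>
        rw [← hω] at h1 h2
      · exact absurd (h2 hx) (Set.disjoint_left.1 hd (h1 hx))
      · have hnb : ¬ a i ⊆ B' := by
          intro hsub'
          have : x ∈ a i ∩ B' := ⟨hx, hsub' hx⟩
          rw [h2] at this
          exact this
        rw [if_pos (h1.trans Set.subset_union_left), if_pos h1, if_neg hnb, add_zero]
      · have hna : ¬ a i ⊆ A := by
          intro hsub'
          have : x ∈ a i ∩ A := ⟨hx, hsub' hx⟩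
          rw [h1] at this
          exact this
        rw [if_pos (h2.trans Set.subset_union_right), if_neg hna, if_pos h2, zero_add]
      · have hna : ¬ a i ⊆ A := by
          intro hsub'
          have : x ∈ a i ∩ A := ⟨hx, hsub' hx⟩
          rw [h1] at this
          exact this
        have hnb : ¬ a i ⊆ B' := by
          intro hsub'
          have : x ∈ a i ∩ B' := ⟨hx, hsub' hx⟩
          rw [h2] at this
          exact this
        have hnu : ¬ a i ⊆ A ∪ B' := by
          intro hsub'
          rcases hsub' hx with hxa | hxb
          · have : x ∈ a i ∩ A := ⟨hx, hxa⟩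
            rw [h1] at this
            exact this
          · have : x ∈ a i ∩ B' := ⟨hx, hxb⟩
            rw [h2] at this
            exact this
        rw [if_neg hnu, if_neg hna, if_neg hnb, add_zero]
    have hPdom : ∀ A ∈ F, v A ≤ P A := by
      intro A hA
      have hmain : ∀ k, k ≤ n →
          v (A ∩ S k) ≤ ∑ i ∈ Finset.range k, (if a i ⊆ A then w i else 0) := by
        intro k
        induction k with
        | zero =>
          intro _
          rw [hS0, Set.inter_empty, hv0]
          simp
        | succ k ih =>
          intro hk1
          have hk : k ≤ n := by omega
          obtain ⟨ω, hω⟩ := ha_atom k (by omega)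
          rw [Finset.sum_range_succ]
          rcases hcases ω A hA with h1 | h1 <;> rw [← hω] at h1
          · have hsplit : A ∩ S (k+1) = (A ∩ S k) ∪ a k := by
              rw [hSsucc, Set.inter_union_distrib_left, Set.inter_eq_right.2 h1]
            have hconv := hconvex (A ∩ S (k+1)) (hFinter _ hA _ (hSF (k+1))) (S k) (hSF k)
            have hu : (A ∩ S (k+1)) ∪ S k = S (k+1) := by
              rw [hsplit, hSsucc]
              ext x
              simp only [Set.mem_union, Set.mem_inter_iff]
              tauto
            have hi2 : (A ∩ S (k+1)) ∩ S k = A ∩ S k := by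
              rw [Set.inter_assoc, Set.inter_comm (S (k+1)),
                Set.inter_eq_left.2 (hSmono k)]
            rw [hu, hi2] at hconv
            rw [if_pos h1]
            have hihk := ih hk
            have hwk : w k = v (S (k+1)) - v (S k) := rfl
            linarith
          · have hsplit : A ∩ S (k+1) = A ∩ S k := by
              rw [hSsucc, Set.inter_union_distrib_left]
              have h1' : A ∩ a k = ∅ := by rw [Set.inter_comm]; exact h1
              rw [h1', Set.union_empty]
            have hnsub : ¬ a k ⊆ A := by
              intro hsub'
              obtain ⟨x, hx⟩ := ha_ne k (by omega)
              have : x ∈ a k ∩ A := ⟨hx, hsub' hx⟩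
              rw [h1] at this
              exact this
            rw [if_neg hnsub, add_zero, hsplit]
            exact ih hk
      have h := hmain n le_rfl
      rw [hSn, Set.inter_univ] at h
      exact h
    have haiS : ∀ i k, i < k → a i ⊆ S k := fun i k hik => fun ω hω => ⟨i, hik, hω⟩
    have hnotsub : ∀ i k, k ≤ i → i < n → ¬ a i ⊆ S k := by
      intro i k hki hin hsub'
      obtain ⟨x, hx⟩ := ha_ne i hin
      obtain ⟨j, hjk, hxj⟩ := hsub' hx
      obtain ⟨ωi, hωi⟩ := ha_atom i hin
      obtain ⟨ωj, hωj⟩ := ha_atom j (by omega)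
      have h1 : a i = atomOf x := by
        rw [hωi]
        exact (heqatom ωi x (hωi ▸ hx)).symm
      have h2 : a j = atomOf x := by
        rw [hωj]
        exact (heqatom ωj x (hωj ▸ hxj)).symm
      have : i = j := ha_inj i j hin (by omega) (h1.trans h2.symm)
      omega
    have hPS : ∀ k, k ≤ n → P (S k) = v (S k) := by
      intro k hk
      simp only [hPdef]
      have hstep : ∑ i ∈ Finset.range n, (if a i ⊆ S k then w i else 0)
          = ∑ i ∈ Finset.range k, (if a i ⊆ S k then w i else 0) := by
        rw [← Finset.sum_subset (Finset.range_subset_range.2 hk)]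
        intro i hi hni
        rw [Finset.mem_range] at hi
        rw [Finset.mem_range, not_lt] at hni
        rw [if_neg (hnotsub i k hni hi)]
      rw [hstep]
      have hall : ∀ i ∈ Finset.range k, (if a i ⊆ S k then w i else 0) = w i := by
        intro i hi
        rw [Finset.mem_range] at hi
        rw [if_pos (haiS i k hi)]
      rw [Finset.sum_congr rfl hall, htele]
    have hBS : ∀ i, i < m → ∃ k, k ≤ n ∧ B i = S k := by
      intro i him
      obtain ⟨k, hkn, hiff⟩ := down_closed_range (fun j => y i ≤ key (a j))
        (fun i' j hij hj hp' => hp'.trans (hkeymono i' j hij hj))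
      refine ⟨k, hkn, ?_⟩
      ext ω
      have hatomL : atomOf ω ∈ L := (hLmem _).2 ⟨ω, rfl⟩
      obtain ⟨j, hj, hje⟩ := List.mem_iff_getElem.1 hatomL
      have haj : a j = atomOf ω := by rw [ha_get j hj, hje]
      have hmB : ω ∈ B i ↔ y i ≤ f ω := Iff.rfl
      have hmS : ω ∈ S k ↔ ∃ j', j' < k ∧ ω ∈ a j' := Iff.rfl
      rw [hmB, hmS]
      constructor
      · intro hyf
        refine ⟨j, ?_, haj ▸ hself ω⟩
        rw [← (hiff j hj)]
        rw [haj, hkey ω]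
        exact hyf
      · rintro ⟨j', hj'k, hωj'⟩
        have hj'n : j' < n := lt_of_lt_of_le hj'k hkn
        obtain ⟨ωj, hωjdef⟩ := ha_atom j' hj'n
        have hej' : a j' = atomOf ω := by
          rw [hωjdef]
          exact (heqatom ωj ω (hωjdef ▸ hωj')).symm
        have hkj' : y i ≤ key (a j') := (hiff j' hj'n).2 hj'k
        rw [hej', hkey ω] at hkj'
        exact hkj'
    have hPB : ∀ i, i < m → P (B i) = v (B i) := by
      intro i him
      obtain ⟨k, hkn, he⟩ := hBS i him
      rw [he, hPS k hkn]
    have hPcore : P ∈ core F v := ⟨hP0, hP1, hPpos, hPadd, hPdom⟩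
    refine ⟨P, hPcore, ?_⟩
    simp only
    rw [hexp_form P hPcore, hG v hv0 hv1]
    congr 1
    apply Finset.sum_congr rfl
    intro i hi
    rw [Finset.mem_Ico] at hi
    rw [hPB i hi.2]
  · rintro x ⟨Q, hQ, rfl⟩
    simp only
    rw [hexp_form Q hQ, hG v hv0 hv1]
    apply add_le_add_right
    apply Finset.sum_le_sum
    intro i hi
    rw [Finset.mem_Ico] at hi
    have hΔ : 0 ≤ y i - y (i-1) := by
      linarith [hy_lt (i-1) i (by omega) hi.2]
    exact mul_le_mul_of_nonneg_left (hQ.2.2.2.2 _ (hBF i)) hΔ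
end

section
/- If V(h) = ∫ ∑_{t=0}^∞ β^t u(h_t) dv is a Choquet discounted expected utility on a two-state-relevant event A with u(0)=0, u(10)>0, u(7)>0 and β u(10) > u(7), and V assigns equal value to the bets f (paying 10 on A, 0 on Aᶜ at time t) and g (paying 10 on Aᶜ, 0 on A at time t), then v(A) = v(Aᶜ); and V(f̂) > V(ĝ) — where f̂ pays 7 on Aᶜ at time t and 10 on A at time t+1, and ĝ pays 7 on Aᶜ at time t and 10 on Aᶜ at time t+1 (0 otherwise) — holds if and only if v(A) + v(Aᶜ) < 1. -/
/-- in the Choquet discounted expected utility example, with `u(0)=0`,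
`u(10), u(7) > 0`, `β u(10) > u(7)` and `β ∈ (0,1)`:
indifference between the bets `f` (paying 10 on `A` at time `t`) and `g` (paying 10
on `Aᶜ` at time `t`) forces `v(A) = v(Aᶜ)`; and `V(f̂) > V(ĝ)` holds if and only if
`v(A) + v(Aᶜ) < 1`. Here
`V(f) = β^t u(10) v(A)`, `V(g) = β^t u(10) v(Aᶜ)`,
`V(f̂) = β^t (u(7) + (β u(10) − u(7)) v(A))` and
`V(ĝ) = β^t (u(7) + β u(10)) v(Aᶜ)`. -/
theorem choquet_example_hedging
    {Ω : Type*} (v : Set Ω → ℝ) (A : Set Ω) (β u10 u7 : ℝ) (t : ℕ)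
    (hβ : β ∈ Set.Ioo (0 : ℝ) 1)
    (hu10 : 0 < u10) (hu7 : 0 < u7) (hβu : u7 < β * u10)
    -- indifference between f and g : V(f) = V(g)
    (hindiff : β ^ t * u10 * v A = β ^ t * u10 * v Aᶜ) :
    v A = v Aᶜ ∧
      (β ^ t * (u7 + (β * u10 - u7) * v A)
          > β ^ t * ((u7 + β * u10) * v Aᶜ)
        ↔ v A + v Aᶜ < 1) := by
  obtain ⟨hβ0, hβ1⟩ := hβ
  have hβt : 0 < β ^ t := pow_pos hβ0 t
  have hv : v A = v Aᶜ :=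
    mul_left_cancel₀ (ne_of_gt (mul_pos hβt hu10)) hindiff
  refine ⟨hv, ?_⟩
  rw [hv, gt_iff_lt, mul_lt_mul_iff_right₀ hβt]
  constructor
  · intro h
    nlinarith
  · intro h
    nlinarith
end
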